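/- arXiv:2211.14252 — 3 statements merged into one kernel-verified Lean document; each statement's English description precedes it below -/
import Mathlib

section
/- (Trivial extremals.) |N₌| = 0 if and only if there exists a splitting pair (r,s) such that |ᾱ_{>x_{r+1},<x_s}| > i_s − i_{r+1} − 1. -/
open Pointwise

namespace Stanley

variable {A : Type*}

/-- Two elements of a partially ordered set are *incomparable*. -/
def Incomp [PartialOrder A] (a b : A) : Prop :=
  ¬ a ≤ b ∧ ¬ b ≤ a

section PosetDefs

variable [PartialOrder A] (n k : ℕ) (x : ℤ → A) (i : ℤ → ℤ) (ℓ : ℤ)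

/-- A linear extension of the `n`-element poset `ᾱ`, modelled as an injective
order-preserving map into `{1,…,n} ⊆ ℤ` (hence an order-preserving bijection
onto `{1,…,n}` since `card ᾱ = n`). -/
def IsLinExt (σ : A → ℤ) : Prop :=
  Function.Injective σ ∧ (∀ a : A, 1 ≤ σ a ∧ σ a ≤ (n : ℤ)) ∧
    ∀ w z : A, w ≤ z → σ w ≤ σ z

/-- The set `N_∘` of linear extensions placing `x_j` at `i_j` for `j ≠ ℓ` and
`x_ℓ` at `i_ℓ + e`, where `e = 1_∘ ∈ {-1,0,1}`. -/
def N (e : ℤ) : Set (A → ℤ) :=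
  { σ | IsLinExt n σ ∧ (∀ j : ℤ, 1 ≤ j → j ≤ (k : ℤ) → j ≠ ℓ → σ (x j) = i j) ∧
      σ (x ℓ) = i ℓ + e }

/-- The position of the *lower companion* of `x_ℓ` in a linear extension of `N_∘`. -/
def lowPos (e : ℤ) : ℤ := if e = -1 then i ℓ else i ℓ - 1

/-- The position of the *upper companion* of `x_ℓ` in a linear extension of `N_∘`. -/
def highPos (e : ℤ) : ℤ := if e = 1 then i ℓ else i ℓ + 1

/-- `N_∘(⋆,∗)` : here `lowInc = true` encodes `⋆ = ≁` (lower companion incomparable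
to `x_ℓ`) and `lowInc = false` encodes `⋆ = ∼`; similarly `upInc` for the upper
companion. -/
def NN (e : ℤ) (lowInc upInc : Bool) : Set (A → ℤ) :=
  { σ | σ ∈ N n k x i ℓ e ∧
      (∀ a : A, σ a = lowPos i ℓ e → (Incomp a (x ℓ) ↔ lowInc = true)) ∧
      (∀ a : A, σ a = highPos i ℓ e → (Incomp a (x ℓ) ↔ upInc = true)) }

/-- `x_r < w`, for `r ∈ {0,…,k+1}`, with the convention that `x_0` is below every
element of `ᾱ` (and `x_{k+1}` above, so that `x_{k+1} < w` never holds). -/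
def gtX (r : ℤ) (w : A) : Prop := r = 0 ∨ (1 ≤ r ∧ r ≤ (k : ℤ) ∧ x r < w)

/-- `w < x_s`, with the convention that `x_{k+1}` is above every element of `ᾱ`. -/
def ltX (s : ℤ) (w : A) : Prop := s = (k : ℤ) + 1 ∨ (1 ≤ s ∧ s ≤ (k : ℤ) ∧ w < x s)

/-- `x_r ≤ w`, with the same conventions. -/
def geX (r : ℤ) (w : A) : Prop := r = 0 ∨ (1 ≤ r ∧ r ≤ (k : ℤ) ∧ x r ≤ w)

/-- `w ≤ x_s`, with the same conventions. -/
def leX (s : ℤ) (w : A) : Prop := s = (k : ℤ) + 1 ∨ (1 ≤ s ∧ s ≤ (k : ℤ) ∧ w ≤ x s)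

/-- `ᾱ_{>x_r,<x_s}`. -/
def betw (r s : ℤ) : Set A := { w | gtX k x r w ∧ ltX k x s w }

/-- `ᾱ_{≥x_r,≤x_s}` (only genuine elements of `ᾱ`; the adjoined `x_0, x_{k+1}` are
never elements). -/
def betwIcc (r s : ℤ) : Set A := { w | geX k x r w ∧ leX k x s w }

/-- `α = {y_1,…,y_{n-k}}` : the complement of the chain `x_1 < ⋯ < x_k` in `ᾱ`. -/
def alphaSet : Set A := { a | ∀ j : ℤ, 1 ≤ j → j ≤ (k : ℤ) → a ≠ x j }

/-- `α_{>x_r,<x_s}`. -/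
def betwA (r s : ℤ) : Set A := { w | w ∈ alphaSet k x ∧ gtX k x r w ∧ ltX k x s w }

/-- `β_m := α \ (α_{<x_m} ∪ α_{>x_{m+1}})` for `m ∈ {0,…,k}`, and `β_m := ∅`
otherwise. -/
def beta (m : ℤ) : Set A :=
  { a | (0 ≤ m ∧ m ≤ (k : ℤ)) ∧ a ∈ alphaSet k x ∧ ¬ ltX k x m a ∧ ¬ gtX k x (m + 1) a }

/-- A *splitting pair* `(r,s)` : `0 ≤ r+1 < s ≤ k+1` and `(r+1,s) ≠ (0,k+1)`. -/
def SplitPair (r s : ℤ) : Prop :=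
  0 ≤ r + 1 ∧ r + 1 < s ∧ s ≤ (k : ℤ) + 1 ∧ ¬(r + 1 = 0 ∧ s = (k : ℤ) + 1)

/-- The combinatorial (super)criticality condition of Definition 2.9 of the paper:
for every `p ≥ 1` and every admissible sequence `j_0 = -1 < j_1 < ⋯ < j_p < k+1 = j_{p+1}`,
`Σ_q [j_q+1 < j_{q+1}]·|ᾱ_{>x_{j_q+1},<x_{j_{q+1}}}|
  ≤ |{q ∈ [p] : j_q ∈ {ℓ-1,ℓ}}| - c + Σ_q [j_q+1 < j_{q+1}]·(i_{j_{q+1}} - i_{j_q+1} - 1)`.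
`c = 2` gives supercriticality, `c = 1` criticality. -/
def CritCond (c : ℤ) : Prop :=
  ∀ p : ℕ, 1 ≤ p → ∀ j : ℕ → ℤ,
    j 0 = -1 → j (p + 1) = (k : ℤ) + 1 →
    (∀ q : ℕ, q ≤ p → j q < j (q + 1)) →
    (∀ q : ℕ, 1 ≤ q → q ≤ p →
        0 < i (j q + 1) - i (j q) - 1 - (if j q = ℓ - 1 ∨ j q = ℓ then 1 else 0)) →
    (∑ q ∈ Finset.range (p + 1),
        if j q + 1 < j (q + 1) then ((betw k x (j q + 1) (j (q + 1))).ncard : ℤ) else 0)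
      ≤ (((Finset.Icc 1 p).filter fun q => j q = ℓ - 1 ∨ j q = ℓ).card : ℤ) - c
        + ∑ q ∈ Finset.range (p + 1),
            (if j q + 1 < j (q + 1) then i (j (q + 1)) - i (j q + 1) - 1 else 0)

/-- The poset `ᾱ` is *supercritical*. -/
def Supercritical : Prop := 0 < (N n k x i ℓ 0).ncard ∧ CritCond k x i ℓ 2

/-- The poset `ᾱ` is *critical*. -/
def Critical : Prop := 0 < (N n k x i ℓ 0).ncard ∧ CritCond k x i ℓ 1

/-- The order polytope `O_β ⊆ ℝ^α ⊆ ℝ^ᾱ` of `β ⊆ α` (coordinates outside `β` vanish). -/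
def orderPolytope (β : Set A) : Set (A → ℝ) :=
  { t | (∀ a : A, a ∉ β → t a = 0) ∧ (∀ a ∈ β, 0 ≤ t a ∧ t a ≤ 1) ∧
      ∀ a b : A, a ∈ β → b ∈ β → a ≤ b → t a ≤ t b }

/-- The polytope `K_m = {t ∈ O_α : t_j = 0 if y_j < x_m, t_j = 1 if y_j > x_{m+1}}`. -/
def Kpoly (m : ℤ) : Set (A → ℝ) :=
  { t | t ∈ orderPolytope (alphaSet k x) ∧
      (∀ a ∈ alphaSet k x, ltX k x m a → t a = 0) ∧
      (∀ a ∈ alphaSet k x, gtX k x (m + 1) a → t a = 1) }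

end PosetDefs

/-- The standing hypotheses: `ᾱ` is a poset with `n` elements containing the chain
`x_1 < ⋯ < x_k`, `0 = i_0 < 1 ≤ i_1 < ⋯ < i_k ≤ n < n+1 = i_{k+1}`, `ℓ ∈ [k]`, and
`i_{ℓ-1} + 1 < i_ℓ < i_{ℓ+1} - 1`. -/
structure Setup [PartialOrder A] [Fintype A] (n k : ℕ) (x : ℤ → A) (i : ℤ → ℤ)
    (ℓ : ℤ) : Prop where
  hk1 : 1 ≤ k
  hkn : k ≤ n
  hcard : Fintype.card A = n
  hchain : ∀ j j' : ℤ, 1 ≤ j → j < j' → j' ≤ (k : ℤ) → x j < x j'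
  hi0 : i 0 = 0
  hitop : i ((k : ℤ) + 1) = (n : ℤ) + 1
  himono : ∀ j j' : ℤ, 1 ≤ j → j < j' → j' ≤ (k : ℤ) → i j < i j'
  hi1 : 1 ≤ i 1
  hik : i (k : ℤ) ≤ (n : ℤ)
  hl1 : 1 ≤ ℓ
  hlk : ℓ ≤ (k : ℤ)
  hgap1 : i (ℓ - 1) + 1 < i ℓ
  hgap2 : i ℓ + 1 < i (ℓ + 1)


-- ==== auxiliary lemmas ====
section Aux

lemma linext_strict [PartialOrder A] {n : ℕ} {σ : A → ℤ} (h : IsLinExt n σ)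
    {a b : A} (hab : a < b) : σ a < σ b :=
  lt_of_le_of_ne (h.2.2 a b hab.le) (fun he => absurd (h.1 he) hab.ne)

lemma hall_of_linext [PartialOrder A] {n k : ℕ} {x : ℤ → A} {i : ℤ → ℤ} {σ : A → ℤ}
    (hlin : IsLinExt n σ) (hval : ∀ j : ℤ, 1 ≤ j → j ≤ (k:ℤ) → σ (x j) = i j)
    (hi0 : i 0 = 0) (hitop : i ((k:ℤ)+1) = (n:ℤ)+1)
    (r s : ℤ) (hr : 0 ≤ r) (hrs : r < s) (hs : s ≤ (k:ℤ)+1) (hirs : i r < i s) :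
    ((betw k x r s).ncard : ℤ) ≤ i s - i r - 1 := by
  have hinj := hlin.1
  have himg : σ '' betw k x r s ⊆ Set.Ico (i r + 1) (i s) := by
    rintro t ⟨w, ⟨hg, hl⟩, rfl⟩
    constructor
    · rcases hg with h0 | ⟨h1, h2, h3⟩
      · rw [h0, hi0]; exact (hlin.2.1 w).1
      · have := linext_strict hlin h3
        rw [hval r h1 h2] at this; omega
    · rcases hl with h0 | ⟨h1, h2, h3⟩
      · rw [h0, hitop]
        have := (hlin.2.1 w).2; omega
      · have := linext_strict hlin h3
        rw [hval s h1 h2] at this; omega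
  have h1 : (betw k x r s).ncard = (σ '' betw k x r s).ncard :=
    (Set.ncard_image_of_injective _ hinj).symm
  have h2 : (σ '' betw k x r s).ncard ≤ (Set.Ico (i r + 1) (i s)).ncard :=
    Set.ncard_le_ncard himg (Set.finite_Ico _ _)
  have h3 : (Set.Ico (i r + 1) (i s)).ncard = (i s - (i r + 1)).toNat := by
    rw [← Finset.coe_Ico, Set.ncard_coe_finset, Int.card_Ico]
  omega

lemma N_finite [PartialOrder A] [Fintype A] (n k : ℕ) (x : ℤ → A) (i : ℤ → ℤ) (ℓ e : ℤ) :
    (N n k x i ℓ e).Finite := by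
  apply Set.Finite.subset
    (Set.Finite.pi (t := fun _ : A => Set.Icc (1:ℤ) n) fun _ => Set.finite_Icc _ _)
  rintro σ ⟨⟨_, hb, _⟩, _, _⟩
  intro a _
  exact hb a

lemma exists_minimal_le_of_mem [PartialOrder A] {S : Set A} (hS : S.Finite) {w : A}
    (hw : w ∈ S) : ∃ t ∈ S, t ≤ w ∧ ∀ z ∈ S, z ≤ t → z = t := by
  classical
  have hfin : (S ∩ Set.Iic w).Finite := hS.subset Set.inter_subset_left
  obtain ⟨m, hm, hmin⟩ := hfin.toFinset.exists_minimal
    ⟨w, by rw [Set.Finite.mem_toFinset]; exact ⟨hw, le_rfl⟩⟩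
  rw [Set.Finite.mem_toFinset] at hm
  refine ⟨m, hm.1, hm.2, fun z hz hzm => ?_⟩
  by_contra hne
  exact hne (le_antisymm hzm (hmin (hfin.mem_toFinset.mpr ⟨hz, hzm.trans hm.2⟩) hzm))

lemma extend_linext [PartialOrder A] [DecidableEq A] {m : ℕ} {y : A}
    (hymin : ∀ z : A, z ≤ y → z = y)
    {σ' : {a : A // a ≠ y} → ℤ} (h : IsLinExt m σ') :
    IsLinExt (m+1) (fun a => if ha : a = y then 1 else σ' ⟨a, ha⟩ + 1) := by
  obtain ⟨hinj, hbd, hmono⟩ := h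
  refine ⟨?_, ?_, ?_⟩
  · intro a b hab
    simp only at hab
    split_ifs at hab with ha hb hb
    · rw [ha, hb]
    · exact absurd hab (by have := (hbd ⟨b, hb⟩).1; omega)
    · exact absurd hab (by have := (hbd ⟨a, ha⟩).1; omega)
    · have : (⟨a, ha⟩ : {a : A // a ≠ y}) = ⟨b, hb⟩ := hinj (by omega)
      exact congrArg Subtype.val this
  · intro a
    dsimp only
    split_ifs with ha
    · refine ⟨le_rfl, ?_⟩; push_cast; omega
    · have := hbd ⟨a, ha⟩; push_cast; omega
  · intro w z hwz
    dsimp only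
    split_ifs with hw hz hz
    · exact le_rfl
    · have := (hbd ⟨z, hz⟩).1; omega
    · exact absurd (hymin w (hz ▸ hwz)) hw
    · have := hmono ⟨w, hw⟩ ⟨z, hz⟩ (Subtype.mk_le_mk.mpr hwz); omega

lemma val_image_betw [PartialOrder A] {y : A} (k' : ℕ) (x' : ℤ → {a : A // a ≠ y})
    (r s : ℤ) :
    Subtype.val '' betw k' x' r s =
      {w : A | w ≠ y ∧ (r = 0 ∨ (1 ≤ r ∧ r ≤ (k':ℤ) ∧ ((x' r : A) < w))) ∧
        (s = (k':ℤ)+1 ∨ (1 ≤ s ∧ s ≤ (k':ℤ) ∧ w < (x' s : A)))} := by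
  ext w
  simp only [Set.mem_image, Set.mem_setOf_eq, betw, gtX, ltX]
  constructor
  · rintro ⟨⟨v, hv⟩, ⟨h1, h2⟩, rfl⟩
    refine ⟨hv, ?_, ?_⟩
    · rcases h1 with h | ⟨ha, hb, hc⟩
      · exact Or.inl h
      · exact Or.inr ⟨ha, hb, Subtype.coe_lt_coe.mpr hc⟩
    · rcases h2 with h | ⟨ha, hb, hc⟩
      · exact Or.inl h
      · exact Or.inr ⟨ha, hb, Subtype.coe_lt_coe.mpr hc⟩
  · rintro ⟨hw, h1, h2⟩
    refine ⟨⟨w, hw⟩, ⟨?_, ?_⟩, rfl⟩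
    · rcases h1 with h | ⟨ha, hb, hc⟩
      · exact Or.inl h
      · exact Or.inr ⟨ha, hb, Subtype.coe_lt_coe.mp hc⟩
    · rcases h2 with h | ⟨ha, hb, hc⟩
      · exact Or.inl h
      · exact Or.inr ⟨ha, hb, Subtype.coe_lt_coe.mp hc⟩

end Aux

universe u

lemma exists_linext (n : ℕ) : ∀ (A : Type u) [PartialOrder A] [Fintype A]
    (k : ℕ) (x : ℤ → A) (i : ℤ → ℤ),
    Fintype.card A = n →
    (∀ j j' : ℤ, 1 ≤ j → j < j' → j' ≤ (k:ℤ) → x j < x j') →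
    i 0 = 0 → i ((k:ℤ)+1) = (n:ℤ)+1 →
    (∀ j j' : ℤ, 0 ≤ j → j < j' → j' ≤ (k:ℤ)+1 → i j < i j') →
    (∀ r s : ℤ, 0 ≤ r → r < s → s ≤ (k:ℤ)+1 →
       ((betw k x r s).ncard : ℤ) ≤ i s - i r - 1) →
    ∃ σ : A → ℤ, IsLinExt n σ ∧ ∀ j : ℤ, 1 ≤ j → j ≤ (k:ℤ) → σ (x j) = i j := by
  induction n with
  | zero =>
    intro A _ _ k x i hcard _ _ _ _ _
    haveI := Fintype.card_eq_zero_iff.mp hcard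
    exact (IsEmpty.false (x 1)).elim
  | succ m IH =>
    intro A _ _ k x i hcard hchain hi0 hitop himono hall
    classical
    have himle : ∀ j j' : ℤ, 0 ≤ j → j ≤ j' → j' ≤ (k:ℤ)+1 → i j ≤ i j' := by
      intro j j' h1 h2 h3
      rcases eq_or_lt_of_le h2 with rfl | h
      · exact le_rfl
      · exact (himono j j' h1 h h3).le
    have hxle : ∀ j j' : ℤ, 1 ≤ j → j ≤ j' → j' ≤ (k:ℤ) → x j ≤ x j' := by
      intro j j' h1 h2 h3
      rcases eq_or_lt_of_le h2 with rfl | h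
      · exact le_rfl
      · exact (hchain j j' h1 h h3).le
    rcases Nat.eq_zero_or_pos m with rfl | hm
    · -- n = 1
      have hsub : Subsingleton A := Fintype.card_le_one_iff_subsingleton.mp (by omega)
      refine ⟨fun _ => 1, ⟨fun a b _ => Subsingleton.elim a b,
        fun a => ⟨le_rfl, by norm_num⟩, fun _ _ _ => le_rfl⟩, ?_⟩
      intro j hj1 hjk
      show (1:ℤ) = i j
      have h1 : i 0 < i j := himono 0 j le_rfl (by omega) (by omega)
      have h2 : i j < i ((k:ℤ)+1) := himono j ((k:ℤ)+1) (by omega) (by omega) le_rfl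
      push_cast at hitop
      omega
    · by_cases hcase : 1 ≤ k ∧ i 1 = 1
      · -- Case A : remove x 1
        obtain ⟨hk1, hi1⟩ := hcase
        obtain ⟨k'', rfl⟩ : ∃ k'', k = k'' + 1 := ⟨k - 1, by omega⟩
        push_cast at hchain hitop himono hall himle hxle
        have hx1min : ∀ z : A, z ≤ x 1 → z = x 1 := by
          intro z hz
          by_contra hne
          have hzlt : z < x 1 := lt_of_le_of_ne hz hne
          have hmem : z ∈ betw (k''+1) x 0 1 :=
            ⟨Or.inl rfl, Or.inr ⟨le_rfl, by push_cast; omega, hzlt⟩⟩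
          have hb := hall 0 1 le_rfl one_pos (by omega)
          rw [hi0, hi1] at hb
          have h0 : (betw (k''+1) x 0 1).ncard = 0 := by omega
          rw [Set.ncard_eq_zero (Set.toFinite _)] at h0
          rw [h0] at hmem
          exact hmem
        haveI : Fintype {a : A // a ≠ x 1} := Fintype.ofFinite _
        have hcard' : Fintype.card {a : A // a ≠ x 1} = m := by
          have hc1 := Fintype.card_subtype_compl (fun a : A => a = x 1)
          rw [Fintype.card_subtype_eq] at hc1
          have hc2 : Fintype.card {a : A // a ≠ x 1} = Fintype.card A - 1 := hc1
          omega
        haveI : Nonempty {a : A // a ≠ x 1} := by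
          rw [← Fintype.card_pos_iff, hcard']; omega
        set x' : ℤ → {a : A // a ≠ x 1} := fun j =>
          if h : 1 ≤ j ∧ j ≤ (k'':ℤ) then
            ⟨x (j+1), (hchain 1 (j+1) le_rfl (by omega) (by omega)).ne'⟩
          else Classical.arbitrary _ with hx'def
        set i' : ℤ → ℤ := fun j => if 1 ≤ j then i (j+1) - 1 else 0 with hi'def
        have hx'eq : ∀ j : ℤ, 1 ≤ j → j ≤ (k'':ℤ) → (x' j : A) = x (j+1) := by
          intro j h1 h2
          rw [hx'def]
          simp only [dif_pos (⟨h1, h2⟩ : 1 ≤ j ∧ j ≤ (k'':ℤ))]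
        have hi'eq : ∀ j : ℤ, 1 ≤ j → i' j = i (j+1) - 1 := by
          intro j h1; rw [hi'def]; simp only [if_pos h1]
        have hi'0 : i' 0 = 0 := by rw [hi'def]; norm_num
        have hC : ∀ j j' : ℤ, 1 ≤ j → j < j' → j' ≤ (k'':ℤ) → x' j < x' j' := by
          intro j j' h1 h2 h3
          apply Subtype.coe_lt_coe.mp
          rw [hx'eq j h1 (by omega), hx'eq j' (by omega) h3]
          exact hchain (j+1) (j'+1) (by omega) (by omega) (by omega)
        have hT : i' ((k'':ℤ)+1) = (m:ℤ)+1 := by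
          rw [hi'eq _ (by omega)]
          omega
        have hM : ∀ j j' : ℤ, 0 ≤ j → j < j' → j' ≤ (k'':ℤ)+1 → i' j < i' j' := by
          intro j j' h0 hlt hle
          rcases le_or_gt 1 j with h1 | h1
          · rw [hi'eq j h1, hi'eq j' (by omega)]
            have := himono (j+1) (j'+1) (by omega) (by omega) (by omega)
            omega
          · have hj0 : j = 0 := by omega
            rw [hj0, hi'0, hi'eq j' (by omega)]
            have := himono 1 (j'+1) (by omega) (by omega) (by omega)
            rw [hi1] at this
            omega
        have hH : ∀ r s : ℤ, 0 ≤ r → r < s → s ≤ (k'':ℤ)+1 →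
            ((betw k'' x' r s).ncard : ℤ) ≤ i' s - i' r - 1 := by
          intro r s hr hrs hs
          have hncard : ((betw k'' x' r s).ncard : ℤ)
              = ((Subtype.val '' betw k'' x' r s).ncard : ℤ) := by
            rw [Set.ncard_image_of_injective _ Subtype.val_injective]
          rcases eq_or_lt_of_le hr with heq | hr1
          · subst heq
            rcases eq_or_lt_of_le hs with heq2 | hs2
            · -- r = 0, s = k''+1 : whole poset minus x 1
              have himg : Subtype.val '' betw k'' x' 0 s = Set.univ \ {x 1} := by
                rw [val_image_betw]
                ext w
                constructor
                · rintro ⟨hw, -, -⟩; exact ⟨trivial, hw⟩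
                · rintro ⟨-, hw⟩; exact ⟨hw, Or.inl rfl, Or.inl heq2⟩
              have hd := Set.ncard_diff_singleton_add_one (Set.mem_univ (x 1))
                (Set.finite_univ)
              rw [Set.ncard_univ, Nat.card_eq_fintype_card, hcard] at hd
              have hvs : i' s = (m:ℤ)+1 := by rw [heq2]; exact hT
              rw [hncard, himg, hi'0]
              omega
            · -- r = 0, 1 ≤ s ≤ k''
              have hs1 : 1 ≤ s := by omega
              have hsk : s ≤ (k'':ℤ) := by omega
              have hx1mem : x 1 ∈ betw (k''+1) x 0 (s+1) :=
                ⟨Or.inl rfl, Or.inr ⟨by omega, by omega,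
                  hchain 1 (s+1) le_rfl (by omega) (by omega)⟩⟩
              have himg : Subtype.val '' betw k'' x' 0 s = betw (k''+1) x 0 (s+1) \ {x 1} := by
                rw [val_image_betw]
                ext w
                simp only [Set.mem_setOf_eq, Set.mem_diff, Set.mem_singleton_iff, betw,
                  gtX, ltX]
                constructor
                · rintro ⟨hw, _, h2⟩
                  refine ⟨⟨Or.inl trivial, ?_⟩, hw⟩
                  rcases h2 with h | ⟨ha, hb, hc⟩
                  · exact absurd h (by omega)
                  · rw [hx'eq s ha hb] at hc
                    exact Or.inr ⟨by omega, by push_cast; omega, hc⟩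
                · rintro ⟨⟨_, h2⟩, hw⟩
                  refine ⟨hw, Or.inl trivial, ?_⟩
                  rcases h2 with h | ⟨ha, hb, hc⟩
                  · exact absurd h (by push_cast; omega)
                  · refine Or.inr ⟨by omega, by omega, ?_⟩
                    rw [hx'eq s (by omega) (by omega)]
                    exact hc
              have hb := hall 0 (s+1) le_rfl (by omega) (by omega)
              rw [hi0] at hb
              have hd := Set.ncard_diff_singleton_add_one hx1mem (Set.toFinite _)
              rw [hncard, himg, hi'0, hi'eq s (by omega)]
              omega
          · -- r ≥ 1
            have himg : Subtype.val '' betw k'' x' r s = betw (k''+1) x (r+1) (s+1) := by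
              rw [val_image_betw]
              ext w
              simp only [Set.mem_setOf_eq, betw, gtX, ltX]
              constructor
              · rintro ⟨hw, h1, h2⟩
                constructor
                · rcases h1 with h | ⟨ha, hb, hc⟩
                  · exact absurd h (by omega)
                  · rw [hx'eq r ha hb] at hc
                    exact Or.inr ⟨by omega, by push_cast; omega, hc⟩
                · rcases h2 with h | ⟨ha, hb, hc⟩
                  · exact Or.inl (by push_cast; omega)
                  · rw [hx'eq s ha hb] at hc
                    exact Or.inr ⟨by omega, by push_cast; omega, hc⟩
              · rintro ⟨h1, h2⟩
                have hrk : r ≤ (k'':ℤ) := by omega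
                have hw : w ≠ x 1 := by
                  rcases h1 with h | ⟨ha, hb, hc⟩
                  · exact absurd h (by omega)
                  · intro he
                    rw [he] at hc
                    exact absurd hc (lt_asymm (hchain 1 (r+1) le_rfl (by omega)
                      (by push_cast at hb; omega)))
                refine ⟨hw, ?_, ?_⟩
                · rcases h1 with h | ⟨ha, hb, hc⟩
                  · exact absurd h (by omega)
                  · refine Or.inr ⟨by omega, by omega, ?_⟩
                    rw [hx'eq r (by omega) (by omega)]
                    exact hc
                · rcases h2 with h | ⟨ha, hb, hc⟩
                  · exact Or.inl (by push_cast at h; omega)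
                  · refine Or.inr ⟨by omega, by push_cast at hb; omega, ?_⟩
                    rw [hx'eq s (by omega) (by push_cast at hb; omega)]
                    exact hc
            have hb := hall (r+1) (s+1) (by omega) (by omega) (by omega)
            rw [hncard, himg, hi'eq s (by omega), hi'eq r (by omega)]
            omega
        obtain ⟨σ', hσ'lin, hσ'val⟩ := IH {a : A // a ≠ x 1} k'' x' i' hcard' hC hi'0 hT hM hH
        refine ⟨fun a => if ha : a = x 1 then 1 else σ' ⟨a, ha⟩ + 1,
          extend_linext hx1min hσ'lin, ?_⟩
        intro j hj1 hjk
        by_cases hj : j = 1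
        · subst hj
          dsimp only
          rw [dif_pos rfl]
          omega
        · have hne : x j ≠ x 1 := (hchain 1 j le_rfl (by omega) (by push_cast at hjk; omega)).ne'
          dsimp only
          rw [dif_neg hne]
          have harg : j - 1 + 1 = j := by omega
          have hx'j : x' (j-1) = ⟨x j, hne⟩ := by
            rw [hx'def]
            simp only [dif_pos (show 1 ≤ j-1 ∧ j-1 ≤ (k'':ℤ) by push_cast at hjk; omega)]
            exact Subtype.ext (congrArg x harg)
          have hv := hσ'val (j-1) (by omega) (by push_cast at hjk; omega)
          rw [hx'j] at hv
          rw [hv, hi'eq (j-1) (by omega)]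
          have : j - 1 + 1 = j := by omega
          rw [this]
          omega
      · -- Case B : remove a minimal non-chain element
        have hi1ge : 1 ≤ k → 2 ≤ i 1 := by
          intro hk
          have h0 : i 0 < i 1 := himono 0 1 le_rfl one_pos (by omega)
          have h1 : i 1 ≠ 1 := fun h => hcase ⟨hk, h⟩
          omega
        have hex : ∃ t : ℕ, 1 ≤ t ∧ (t:ℤ) ≤ (k:ℤ)+1 ∧
            ((betw k x 0 (t:ℤ)).ncard : ℤ) = i (t:ℤ) - 1 := by
          refine ⟨k+1, by omega, by push_cast; omega, ?_⟩
          have huniv : betw k x 0 ((k+1:ℕ):ℤ) = Set.univ := by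
            ext w
            constructor
            · intro _; trivial
            · intro _; exact ⟨Or.inl rfl, Or.inl (by push_cast; ring)⟩
          rw [huniv, Set.ncard_univ, Nat.card_eq_fintype_card, hcard]
          rw [show ((k+1:ℕ):ℤ) = (k:ℤ)+1 by push_cast; ring, hitop]
          push_cast; ring
        obtain ⟨st, ⟨hst1, hstk, hsttight⟩, hstmin⟩ :
            ∃ st : ℕ, (1 ≤ st ∧ (st:ℤ) ≤ (k:ℤ)+1 ∧
              ((betw k x 0 (st:ℤ)).ncard : ℤ) = i (st:ℤ) - 1) ∧
              ∀ t : ℕ, t < st → ¬(1 ≤ t ∧ (t:ℤ) ≤ (k:ℤ)+1 ∧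
                ((betw k x 0 (t:ℤ)).ncard : ℤ) = i (t:ℤ) - 1) :=
          ⟨Nat.find hex, Nat.find_spec hex, fun t ht => Nat.find_min hex ht⟩
        set S := betw k x 0 (st:ℤ) with hSdef
        have hist2 : 2 ≤ i (st:ℤ) := by
          rcases Nat.eq_zero_or_pos k with hk0 | hk1
          · have hsteq : (st:ℤ) = (k:ℤ)+1 := by omega
            rw [hsteq, hitop]; push_cast; omega
          · have h1 := hi1ge hk1
            have h2 : i 1 ≤ i (st:ℤ) := himle 1 (st:ℤ) (by omega) (by omega) hstk
            omega
        have hSn : S.Nonempty := by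
          apply Set.nonempty_of_ncard_ne_zero
          omega
        obtain ⟨w0, hw0⟩ := hSn
        have hkey : ∃ y ∈ S, (∀ z ∈ S, z ≤ y → z = y) ∧
            ∀ j : ℤ, 1 ≤ j → j ≤ (k:ℤ) → y ≠ x j := by
          by_contra hcon
          push_neg at hcon
          obtain ⟨m0, hm0S, hm0le, hm0min⟩ := exists_minimal_le_of_mem (Set.toFinite S) hw0
          obtain ⟨j0, hj01, hj0k, hj0eq⟩ := hcon m0 hm0S hm0min
          have hk1 : 1 ≤ (k:ℤ) := le_trans hj01 hj0k
          have hst2 : 2 ≤ (st:ℤ) := by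
            rcases hm0S.2 with h | ⟨ha, hb, hc⟩
            · omega
            · by_contra h2
              have hst1' : (st:ℤ) = 1 := by omega
              rw [hj0eq, hst1'] at hc
              exact absurd hc (hxle 1 j0 le_rfl hj01 hj0k).not_gt
          have hminx1 : ∀ t ∈ S, (∀ z ∈ S, z ≤ t → z = t) → t = x 1 := by
            intro t htS htmin
            obtain ⟨j, hj1, hjk, hjeq⟩ := hcon t htS htmin
            rcases eq_or_lt_of_le hj1 with h | h
            · rw [hjeq, ← h]
            · have hx1t : x 1 < t := by
                rw [hjeq]; exact hchain 1 j le_rfl h hjk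
              have hx1S : x 1 ∈ S := by
                refine ⟨Or.inl rfl, ?_⟩
                rcases eq_or_lt_of_le hstk with he | hlt
                · exact Or.inl he
                · exact Or.inr ⟨by omega, by omega, hchain 1 (st:ℤ) le_rfl (by omega) (by omega)⟩
              have heq := htmin (x 1) hx1S hx1t.le
              rw [heq] at hx1t
              exact absurd hx1t (lt_irrefl t)
          have hsub : S \ {x 1} ⊆ betw k x 1 (st:ℤ) := by
            rintro w ⟨hwS, hwne⟩
            obtain ⟨t, htS, htle, htmin⟩ := exists_minimal_le_of_mem (Set.toFinite S) hwS
            have ht1 : t = x 1 := hminx1 t htS htmin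
            rw [ht1] at htle
            have hx1lt : x 1 < w := lt_of_le_of_ne htle (Ne.symm hwne)
            exact ⟨Or.inr ⟨le_rfl, hk1, hx1lt⟩, hwS.2⟩
          have hx1S : x 1 ∈ S := by
            have h := hminx1 m0 hm0S hm0min
            rw [← h]; exact hm0S
          have hcard1 := Set.ncard_diff_singleton_add_one hx1S (Set.toFinite S)
          have hcard2 := Set.ncard_le_ncard hsub (Set.toFinite _)
          have hb := hall 1 (st:ℤ) (by omega) (by omega) (by omega)
          have h1 := hi1ge (by omega)
          omega
        obtain ⟨y, hyS, hymin', hynotchain⟩ := hkey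
        have hymin : ∀ z : A, z ≤ y → z = y := by
          intro z hz
          rcases eq_or_lt_of_le hz with h | h
          · exact h
          · refine hymin' z ⟨Or.inl rfl, ?_⟩ hz
            rcases hyS.2 with hh | ⟨ha, hb, hc⟩
            · exact Or.inl hh
            · exact Or.inr ⟨ha, hb, h.trans hc⟩
        haveI : Fintype {a : A // a ≠ y} := Fintype.ofFinite _
        have hcard' : Fintype.card {a : A // a ≠ y} = m := by
          have hc1 := Fintype.card_subtype_compl (fun a : A => a = y)
          rw [Fintype.card_subtype_eq] at hc1
          have hc2 : Fintype.card {a : A // a ≠ y} = Fintype.card A - 1 := hc1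
          omega
        haveI : Nonempty {a : A // a ≠ y} := by
          rw [← Fintype.card_pos_iff, hcard']; omega
        set x' : ℤ → {a : A // a ≠ y} := fun j =>
          if h : 1 ≤ j ∧ j ≤ (k:ℤ) then ⟨x j, (hynotchain j h.1 h.2).symm⟩
          else Classical.arbitrary _ with hx'def
        set i' : ℤ → ℤ := fun j => if 1 ≤ j then i j - 1 else 0 with hi'def
        have hx'eq : ∀ j : ℤ, 1 ≤ j → j ≤ (k:ℤ) → (x' j : A) = x j := by
          intro j h1 h2
          rw [hx'def]
          simp only [dif_pos (⟨h1, h2⟩ : 1 ≤ j ∧ j ≤ (k:ℤ))]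
        have hi'eq : ∀ j : ℤ, 1 ≤ j → i' j = i j - 1 := by
          intro j h1; rw [hi'def]; simp only [if_pos h1]
        have hi'0 : i' 0 = 0 := by rw [hi'def]; norm_num
        have hC : ∀ j j' : ℤ, 1 ≤ j → j < j' → j' ≤ (k:ℤ) → x' j < x' j' := by
          intro j j' h1 h2 h3
          apply Subtype.coe_lt_coe.mp
          rw [hx'eq j h1 (by omega), hx'eq j' (by omega) h3]
          exact hchain j j' h1 h2 h3
        have hT : i' ((k:ℤ)+1) = (m:ℤ)+1 := by
          rw [hi'eq _ (by omega), hitop]; push_cast; ring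
        have hM : ∀ j j' : ℤ, 0 ≤ j → j < j' → j' ≤ (k:ℤ)+1 → i' j < i' j' := by
          intro j j' h0 hlt hle
          rcases le_or_gt 1 j with h1 | h1
          · rw [hi'eq j h1, hi'eq j' (by omega)]
            have := himono j j' (by omega) hlt hle
            omega
          · have hj0 : j = 0 := by omega
            rw [hj0, hi'0, hi'eq j' (by omega)]
            rcases eq_or_lt_of_le hle with he | hlt2
            · rw [he, hitop]; push_cast; omega
            · have hk1 : 1 ≤ (k:ℤ) := by omega
              have h2 := hi1ge (by omega)
              have h3 : i 1 ≤ i j' := himle 1 j' (by omega) (by omega) (by omega)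
              omega
        have hH : ∀ r s : ℤ, 0 ≤ r → r < s → s ≤ (k:ℤ)+1 →
            ((betw k x' r s).ncard : ℤ) ≤ i' s - i' r - 1 := by
          intro r s hr hrs hs
          have hncard : ((betw k x' r s).ncard : ℤ)
              = ((Subtype.val '' betw k x' r s).ncard : ℤ) := by
            rw [Set.ncard_image_of_injective _ Subtype.val_injective]
          have himg : Subtype.val '' betw k x' r s = betw k x r s \ {y} := by
            rw [val_image_betw]
            ext w
            simp only [Set.mem_setOf_eq, Set.mem_diff, Set.mem_singleton_iff, betw, gtX, ltX]
            constructor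
            · rintro ⟨hw, h1, h2⟩
              refine ⟨⟨?_, ?_⟩, hw⟩
              · rcases h1 with h | ⟨ha, hb, hc⟩
                · exact Or.inl h
                · rw [hx'eq r ha hb] at hc
                  exact Or.inr ⟨ha, hb, hc⟩
              · rcases h2 with h | ⟨ha, hb, hc⟩
                · exact Or.inl h
                · rw [hx'eq s ha hb] at hc
                  exact Or.inr ⟨ha, hb, hc⟩
            · rintro ⟨⟨h1, h2⟩, hw⟩
              refine ⟨hw, ?_, ?_⟩
              · rcases h1 with h | ⟨ha, hb, hc⟩
                · exact Or.inl h
                · refine Or.inr ⟨ha, hb, ?_⟩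
                  rw [hx'eq r ha hb]
                  exact hc
              · rcases h2 with h | ⟨ha, hb, hc⟩
                · exact Or.inl h
                · refine Or.inr ⟨ha, hb, ?_⟩
                  rw [hx'eq s ha hb]
                  exact hc
          rw [hncard, himg]
          rcases eq_or_lt_of_le hr with heq | hr1
          · subst heq
            rw [hi'0, hi'eq s (by omega)]
            by_cases htight : ((betw k x 0 s).ncard : ℤ) = i s - 1
            · have hyb : y ∈ betw k x 0 s := by
                refine ⟨Or.inl rfl, ?_⟩
                rcases eq_or_lt_of_le hs with he | hsk
                · exact Or.inl he
                · have hstle : (st:ℤ) ≤ s := by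
                    by_contra hlt
                    push_neg at hlt
                    have hts : ((s.toNat:ℕ):ℤ) = s := Int.toNat_of_nonneg (by omega)
                    refine hstmin s.toNat (by omega) ⟨by omega, ?_, ?_⟩
                    · rw [hts]; exact hs
                    · rw [hts]; exact htight
                  rcases hyS.2 with hh | ⟨ha, hb, hc⟩
                  · exact absurd hh (by omega)
                  · refine Or.inr ⟨by omega, by omega, ?_⟩
                    rcases eq_or_lt_of_le hstle with he2 | hlt2
                    · rwa [he2] at hc
                    · exact hc.trans (hchain (st:ℤ) s ha hlt2 (by omega))
              have hd := Set.ncard_diff_singleton_add_one hyb (Set.toFinite _)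
              omega
            · have hble := hall 0 s le_rfl (by omega) hs
              rw [hi0] at hble
              have hd := Set.ncard_le_ncard
                (show betw k x 0 s \ {y} ⊆ betw k x 0 s from Set.diff_subset)
                (Set.toFinite (betw k x 0 s))
              omega
          · rw [hi'eq s (by omega), hi'eq r (by omega)]
            have hble := hall r s (by omega) hrs hs
            have hd := Set.ncard_le_ncard
              (show betw k x r s \ {y} ⊆ betw k x r s from Set.diff_subset)
              (Set.toFinite (betw k x r s))
            omega
        obtain ⟨σ', hσ'lin, hσ'val⟩ := IH {a : A // a ≠ y} k x' i' hcard' hC hi'0 hT hM hH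
        refine ⟨fun a => if ha : a = y then 1 else σ' ⟨a, ha⟩ + 1,
          extend_linext hymin hσ'lin, ?_⟩
        intro j hj1 hjk
        have hne : x j ≠ y := (hynotchain j hj1 hjk).symm
        dsimp only
        rw [dif_neg hne]
        have hx'j : x' j = ⟨x j, hne⟩ := by
          rw [hx'def]
          simp only [dif_pos (⟨hj1, hjk⟩ : 1 ≤ j ∧ j ≤ (k:ℤ))]
        have hv := hσ'val j hj1 hjk
        rw [hx'j] at hv
        rw [hv, hi'eq j hj1]
        omega


/-- **Trivial extremals** (Theorem 5.4): `|N₌| = 0` if and only if there exists a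
splitting pair `(r,s)` with `|ᾱ_{>x_{r+1},<x_s}| > i_s - i_{r+1} - 1`. -/
theorem trivial_extremals
    {A : Type*} [PartialOrder A] [Fintype A]
    (n k : ℕ) (x : ℤ → A) (i : ℤ → ℤ) (ℓ : ℤ)
    (hsetup : Setup n k x i ℓ) :
    (N n k x i ℓ 0).ncard = 0 ↔
      ∃ r s : ℤ, SplitPair k r s ∧
        i s - i (r + 1) - 1 < ((betw k x (r + 1) s).ncard : ℤ) := by
  classical
  obtain ⟨hk1, hkn, hcard, hchain, hi0, hitop, himono, hi1, hik, hl1, hlk, hgap1, hgap2⟩ :=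
    hsetup
  have himonoF : ∀ j j' : ℤ, 0 ≤ j → j < j' → j' ≤ (k:ℤ)+1 → i j < i j' := by
    intro j j' h0 hlt hle
    by_cases hj'top : j' = (k:ℤ)+1
    · subst hj'top
      rw [hitop]
      by_cases hj0 : j = 0
      · rw [hj0, hi0]; omega
      · have hjge : 1 ≤ j := by omega
        have hjk : j ≤ (k:ℤ) := by omega
        have hle2 : i j ≤ i (k:ℤ) := by
          rcases eq_or_lt_of_le hjk with he | hlt2
          · rw [he]
          · exact (himono j (k:ℤ) hjge hlt2 le_rfl).le
        omega
    · have hj'k : j' ≤ (k:ℤ) := by omega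
      by_cases hj0 : j = 0
      · have h1 : 1 ≤ i j' := by
          rcases eq_or_lt_of_le (show (1:ℤ) ≤ j' by omega) with h | h
          · rw [← h]; exact hi1
          · exact le_trans hi1 (himono 1 j' le_rfl h hj'k).le
        rw [hj0, hi0]; omega
      · exact himono j j' (by omega) hlt hj'k
  constructor
  · intro h0
    by_contra hns
    push_neg at hns
    have hall : ∀ r s : ℤ, 0 ≤ r → r < s → s ≤ (k:ℤ)+1 →
        ((betw k x r s).ncard : ℤ) ≤ i s - i r - 1 := by
      intro r s hr hrs hs
      by_cases hrs0 : r = 0 ∧ s = (k:ℤ)+1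
      · obtain ⟨rfl, rfl⟩ := hrs0
        have huniv : betw k x 0 ((k:ℤ)+1) = Set.univ := by
          ext w
          constructor
          · intro _; trivial
          · intro _; exact ⟨Or.inl rfl, Or.inl rfl⟩
        rw [huniv, Set.ncard_univ, Nat.card_eq_fintype_card, hcard, hi0, hitop]
        omega
      · have hsp : SplitPair k (r-1) s := by
          refine ⟨by omega, by omega, hs, ?_⟩
          rintro ⟨h1, h2⟩
          exact hrs0 ⟨by omega, h2⟩
        have hb := hns (r-1) s hsp
        rwa [sub_add_cancel] at hb
    obtain ⟨σ, hσlin, hσval⟩ := exists_linext n A k x i hcard hchain hi0 hitop himonoF hall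
    have hmem : σ ∈ N n k x i ℓ 0 :=
      ⟨hσlin, fun j h1 h2 _ => hσval j h1 h2, by rw [hσval ℓ hl1 hlk]; ring⟩
    rw [Set.ncard_eq_zero (N_finite n k x i ℓ 0)] at h0
    rw [h0] at hmem
    exact hmem
  · rintro ⟨r, s, ⟨hs0, hs1, hs2, hs3⟩, hviol⟩
    rw [Set.ncard_eq_zero (N_finite n k x i ℓ 0)]
    rw [Set.eq_empty_iff_forall_notMem]
    rintro σ ⟨hσlin, hσval1, hσval2⟩
    have hσval : ∀ j : ℤ, 1 ≤ j → j ≤ (k:ℤ) → σ (x j) = i j := by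
      intro j h1 h2
      by_cases hj : j = ℓ
      · rw [hj, hσval2]; ring
      · exact hσval1 j h1 h2 hj
    have hb := hall_of_linext hσlin hσval hi0 hitop (r+1) s hs0 hs1 hs2
      (himonoF (r+1) s hs0 hs1 hs2)
    omega



end Stanley
end

section
/- (Decomposition identities for linear extensions.) For any poset ᾱ as in the setup, the following hold: (i) |N₋(≁,≁)| = |N₌(≁,≁)| = |N₊(≁,≁)|; (ii) |N₋(≁,∼)| = |N₌(≁,∼)|; (iii) |N₌(∼,≁)| = |N₊(∼,≁)|; (iv) |N₋(∼,≁)| ≤ |N₋(≁,∼)|; (v) |N₊(≁,∼)| ≤ |N₊(∼,≁)|. -/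
open Pointwise

namespace Stanley

variable {A : Type*}

section Aux

set_option linter.unusedSectionVars false

variable {A : Type*} [PartialOrder A] [Fintype A]
variable {n k : ℕ} {x : ℤ → A} {i : ℤ → ℤ} {ℓ : ℤ}

lemma i_mono_le (h : Setup n k x i ℓ) {j j' : ℤ} (h1 : 1 ≤ j) (h2 : j ≤ j')
    (h3 : j' ≤ (k : ℤ)) : i j ≤ i j' := by
  rcases eq_or_lt_of_le h2 with rfl | hlt
  · exact le_rfl
  · exact (h.himono j j' h1 hlt h3).le

lemma ilm1_nonneg (h : Setup n k x i ℓ) : 0 ≤ i (ℓ - 1) := by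
  rcases eq_or_lt_of_le h.hl1 with h1 | h1
  · rw [show ℓ - 1 = 0 by omega, h.hi0]
  · have h2 : i 1 ≤ i (ℓ - 1) := i_mono_le h le_rfl (by omega) (by linarith [h.hlk])
    linarith [h.hi1]

lemma low_bound (h : Setup n k x i ℓ) : 1 ≤ i ℓ - 1 := by
  have := ilm1_nonneg h; have := h.hgap1; omega

lemma ilp1_le (h : Setup n k x i ℓ) : i (ℓ + 1) ≤ (n : ℤ) + 1 := by
  rcases eq_or_lt_of_le h.hlk with h1 | h1
  · rw [show ℓ + 1 = (k : ℤ) + 1 by omega, h.hitop]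
  · have h2 : i (ℓ + 1) ≤ i (k : ℤ) := i_mono_le h (by linarith [h.hl1]) (by omega) le_rfl
    linarith [h.hik]

lemma high_bound (h : Setup n k x i ℓ) : i ℓ + 1 ≤ (n : ℤ) := by
  have := ilp1_le h; have := h.hgap2; omega

lemma ij_far (h : Setup n k x i ℓ) {j : ℤ} (h1 : 1 ≤ j) (h2 : j ≤ (k : ℤ)) (h3 : j ≠ ℓ) :
    i j < i ℓ - 1 ∨ i ℓ + 1 < i j := by
  rcases lt_or_gt_of_ne h3 with hj | hj
  · left
    have : i j ≤ i (ℓ - 1) := i_mono_le h h1 (by omega) (by linarith [h.hlk])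
    linarith [h.hgap1]
  · right
    have : i (ℓ + 1) ≤ i j := i_mono_le h (by linarith [h.hl1]) (by omega) h2
    linarith [h.hgap2]

lemma linext_surj (hcard : Fintype.card A = n) {σ : A → ℤ} (hσ : IsLinExt n σ)
    {p : ℤ} (hp1 : 1 ≤ p) (hp2 : p ≤ (n : ℤ)) : ∃ a, σ a = p := by
  obtain ⟨hinj, hbd, -⟩ := hσ
  set f : A → (Finset.Icc (1 : ℤ) (n : ℤ)) := fun a =>
    ⟨σ a, by simp only [Finset.mem_Icc]; exact hbd a⟩ with hf
  have hfinj : Function.Injective f := fun a b hab => hinj (congrArg Subtype.val hab)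
  have hcard2 : Fintype.card (Finset.Icc (1 : ℤ) (n : ℤ)) = n := by
    simp [Int.card_Icc]
  have hbij : Function.Bijective f := by
    rw [Fintype.bijective_iff_injective_and_card]
    exact ⟨hfinj, by rw [hcard, hcard2]⟩
  obtain ⟨a, ha⟩ := hbij.2 ⟨p, by simp only [Finset.mem_Icc]; omega⟩
  exact ⟨a, congrArg Subtype.val ha⟩

lemma swap_linext {σ : A → ℤ} (hσ : IsLinExt n σ) {p q : ℤ} (hq : q = p + 1)
    (hp1 : 1 ≤ p) (hp2 : q ≤ (n : ℤ)) {a b : A}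
    (ha : σ a = p) (hb : σ b = q) (hab : ¬ a ≤ b) :
    IsLinExt n (⇑(Equiv.swap p q) ∘ σ) := by
  subst hq
  obtain ⟨hinj, hbd, hmono⟩ := hσ
  refine ⟨(Equiv.swap p (p + 1)).injective.comp hinj, ?_, ?_⟩
  · intro c
    have := hbd c
    simp only [Function.comp_apply, Equiv.swap_apply_def]
    split_ifs <;> omega
  · intro w z hwz
    have h1 := hmono w z hwz
    have h2 := hbd w
    have h3 := hbd z
    by_cases hc : σ w = p ∧ σ z = p + 1
    · have hw : w = a := hinj (by rw [hc.1, ha])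
      have hz : z = b := hinj (by rw [hc.2, hb])
      exact absurd (hw ▸ hz ▸ hwz) hab
    · rcases not_and_or.mp hc with hc | hc <;>
      · simp only [Function.comp_apply, Equiv.swap_apply_def]
        split_ifs <;> omega

lemma swap_comp_invol (p q : ℤ) (σ : A → ℤ) :
    ⇑(Equiv.swap p q) ∘ (⇑(Equiv.swap p q) ∘ σ) = σ := by
  funext c
  simp [Function.comp_apply, Equiv.swap_apply_self]

lemma swap_comp_inj (p q : ℤ) :
    Function.Injective (fun σ : A → ℤ => ⇑(Equiv.swap p q) ∘ σ) := by
  intro σ σ' hh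
  have h2 := congrArg (fun τ : A → ℤ => ⇑(Equiv.swap p q) ∘ τ) hh
  simpa only [swap_comp_invol] using h2

lemma swap_comp_eq {p q v : ℤ} {σ : A → ℤ} {a : A}
    (hva : (⇑(Equiv.swap p q) ∘ σ) a = v) : σ a = Equiv.swap p q v := by
  have h2 := congrArg (⇑(Equiv.swap p q)) hva
  rwa [Function.comp_apply, Equiv.swap_apply_self] at h2

lemma NN_finite (e : ℤ) (t u : Bool) : (NN n k x i ℓ e t u).Finite := by
  have hsub : (NN n k x i ℓ e t u) ⊆
      Set.pi Set.univ (fun _ : A => Set.Icc (1 : ℤ) (n : ℤ)) := by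
    intro σ hσ a _
    exact Set.mem_Icc.mpr (hσ.1.1.2.1 a)
  exact Set.Finite.subset (Set.Finite.pi fun _ => Set.finite_Icc _ _) hsub

lemma ncard_eq_of_swap {p q : ℤ} {S S' : Set (A → ℤ)}
    (h1 : ∀ σ ∈ S, ⇑(Equiv.swap p q) ∘ σ ∈ S')
    (h2 : ∀ σ ∈ S', ⇑(Equiv.swap p q) ∘ σ ∈ S) :
    S.ncard = S'.ncard := by
  have himg : (fun σ : A → ℤ => ⇑(Equiv.swap p q) ∘ σ) '' S = S' := by
    apply Set.Subset.antisymm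
    · rintro _ ⟨σ, hσ, rfl⟩; exact h1 σ hσ
    · intro σ' hσ'
      exact ⟨_, h2 σ' hσ', swap_comp_invol p q σ'⟩
  rw [← himg, Set.ncard_image_of_injective _ (swap_comp_inj p q)]

lemma ncard_le_of_swap {p q : ℤ} {S S' : Set (A → ℤ)} (hS' : S'.Finite)
    (h1 : ∀ σ ∈ S, ⇑(Equiv.swap p q) ∘ σ ∈ S') :
    S.ncard ≤ S'.ncard := by
  calc S.ncard = ((fun σ : A → ℤ => ⇑(Equiv.swap p q) ∘ σ) '' S).ncard :=
        (Set.ncard_image_of_injective S (swap_comp_inj p q)).symm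
    _ ≤ S'.ncard :=
        Set.ncard_le_ncard (by rintro _ ⟨σ, hσ, rfl⟩; exact h1 σ hσ) hS'

lemma N_transfer (h : Setup n k x i ℓ) {σ : A → ℤ} {e e' p q : ℤ}
    (hq : q = p + 1) (hp : i ℓ - 1 ≤ p) (hqle : q ≤ i ℓ + 1)
    (hmem : σ ∈ N n k x i ℓ e) (hswap : IsLinExt n (⇑(Equiv.swap p q) ∘ σ))
    (hxl' : Equiv.swap p q (i ℓ + e) = i ℓ + e') :
    ⇑(Equiv.swap p q) ∘ σ ∈ N n k x i ℓ e' := by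
  obtain ⟨hle, hxj, hxl⟩ := hmem
  refine ⟨hswap, ?_, ?_⟩
  · intro j hj1 hj2 hj3
    have hfar := ij_far h hj1 hj2 hj3
    have hj := hxj j hj1 hj2 hj3
    simp only [Function.comp_apply, hj]
    exact Equiv.swap_apply_of_ne_of_ne (by omega) (by omega)
  · simp only [Function.comp_apply, hxl]
    exact hxl'

set_option linter.unusedSectionVars false

lemma L1 (h : Setup n k x i ℓ) (u : Bool) {σ : A → ℤ}
    (hσ : σ ∈ NN n k x i ℓ (-1) true u) :
    ⇑(Equiv.swap (i ℓ - 1) (i ℓ)) ∘ σ ∈ NN n k x i ℓ 0 true u := by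
  obtain ⟨hN, hlow, hhigh⟩ := hσ
  simp only [lowPos, highPos] at hlow hhigh
  norm_num at hlow hhigh
  have hle := hN.1
  have hxl : σ (x ℓ) = i ℓ - 1 := by have := hN.2.2; omega
  obtain ⟨b, hb⟩ := linext_surj h.hcard hle (p := i ℓ)
    (by have := low_bound h; omega) (by have := high_bound h; omega)
  have hbinc : Incomp b (x ℓ) := hlow b hb
  have hswap := swap_linext hle (show i ℓ = i ℓ - 1 + 1 by ring) (low_bound h)
    (by have := high_bound h; omega) hxl hb hbinc.2
  refine ⟨N_transfer h (by ring) le_rfl (by omega) hN hswap ?_, ?_, ?_⟩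
  · rw [show i ℓ + (-1) = i ℓ - 1 by ring, Equiv.swap_apply_left]; ring
  · intro a hva
    simp only [lowPos] at hva; norm_num at hva
    have hsa := swap_comp_eq hva
    rw [Equiv.swap_apply_left] at hsa
    simpa using hlow a hsa
  · intro a hva
    simp only [highPos] at hva; norm_num at hva
    have hsa := swap_comp_eq hva
    rw [Equiv.swap_apply_of_ne_of_ne (by omega) (by omega)] at hsa
    exact hhigh a hsa

lemma L2 (h : Setup n k x i ℓ) (u : Bool) {σ : A → ℤ}
    (hσ : σ ∈ NN n k x i ℓ 0 true u) :
    ⇑(Equiv.swap (i ℓ - 1) (i ℓ)) ∘ σ ∈ NN n k x i ℓ (-1) true u := by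
  obtain ⟨hN, hlow, hhigh⟩ := hσ
  simp only [lowPos, highPos] at hlow hhigh
  norm_num at hlow hhigh
  have hle := hN.1
  have hxl : σ (x ℓ) = i ℓ := by have := hN.2.2; omega
  obtain ⟨b, hb⟩ := linext_surj h.hcard hle (p := i ℓ - 1)
    (low_bound h) (by have := high_bound h; omega)
  have hbinc : Incomp b (x ℓ) := hlow b hb
  have hswap := swap_linext hle (show i ℓ = i ℓ - 1 + 1 by ring) (low_bound h)
    (by have := high_bound h; omega) hb hxl hbinc.1
  refine ⟨N_transfer h (by ring) le_rfl (by omega) hN hswap ?_, ?_, ?_⟩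
  · rw [show i ℓ + 0 = i ℓ by ring, Equiv.swap_apply_right]; ring
  · intro a hva
    simp only [lowPos] at hva; norm_num at hva
    have hsa := swap_comp_eq hva
    rw [Equiv.swap_apply_right] at hsa
    simpa using hlow a hsa
  · intro a hva
    simp only [highPos] at hva; norm_num at hva
    have hsa := swap_comp_eq hva
    rw [Equiv.swap_apply_of_ne_of_ne (by omega) (by omega)] at hsa
    exact hhigh a hsa

lemma L3 (h : Setup n k x i ℓ) (t : Bool) {σ : A → ℤ}
    (hσ : σ ∈ NN n k x i ℓ 0 t true) :
    ⇑(Equiv.swap (i ℓ) (i ℓ + 1)) ∘ σ ∈ NN n k x i ℓ 1 t true := by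
  obtain ⟨hN, hlow, hhigh⟩ := hσ
  simp only [lowPos, highPos] at hlow hhigh
  norm_num at hlow hhigh
  have hle := hN.1
  have hxl : σ (x ℓ) = i ℓ := by have := hN.2.2; omega
  obtain ⟨b, hb⟩ := linext_surj h.hcard hle (p := i ℓ + 1)
    (by have := low_bound h; omega) (high_bound h)
  have hbinc : Incomp b (x ℓ) := hhigh b hb
  have hswap := swap_linext hle rfl (by have := low_bound h; omega)
    (high_bound h) hxl hb hbinc.2
  refine ⟨N_transfer h rfl (by omega) le_rfl hN hswap ?_, ?_, ?_⟩
  · rw [show i ℓ + 0 = i ℓ by ring, Equiv.swap_apply_left]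
  · intro a hva
    simp only [lowPos] at hva; norm_num at hva
    have hsa := swap_comp_eq hva
    rw [Equiv.swap_apply_of_ne_of_ne (by omega) (by omega)] at hsa
    exact hlow a hsa
  · intro a hva
    simp only [highPos] at hva; norm_num at hva
    have hsa := swap_comp_eq hva
    rw [Equiv.swap_apply_left] at hsa
    simpa using hhigh a hsa

lemma L4 (h : Setup n k x i ℓ) (t : Bool) {σ : A → ℤ}
    (hσ : σ ∈ NN n k x i ℓ 1 t true) :
    ⇑(Equiv.swap (i ℓ) (i ℓ + 1)) ∘ σ ∈ NN n k x i ℓ 0 t true := by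
  obtain ⟨hN, hlow, hhigh⟩ := hσ
  simp only [lowPos, highPos] at hlow hhigh
  norm_num at hlow hhigh
  have hle := hN.1
  have hxl : σ (x ℓ) = i ℓ + 1 := hN.2.2
  obtain ⟨b, hb⟩ := linext_surj h.hcard hle (p := i ℓ)
    (by have := low_bound h; omega) (by have := high_bound h; omega)
  have hbinc : Incomp b (x ℓ) := hhigh b hb
  have hswap := swap_linext hle rfl (by have := low_bound h; omega)
    (high_bound h) hb hxl hbinc.1
  refine ⟨N_transfer h rfl (by omega) le_rfl hN hswap ?_, ?_, ?_⟩
  · rw [Equiv.swap_apply_right]; ring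
  · intro a hva
    simp only [lowPos] at hva; norm_num at hva
    have hsa := swap_comp_eq hva
    rw [Equiv.swap_apply_of_ne_of_ne (by omega) (by omega)] at hsa
    exact hlow a hsa
  · intro a hva
    simp only [highPos] at hva; norm_num at hva
    have hsa := swap_comp_eq hva
    rw [Equiv.swap_apply_right] at hsa
    simpa using hhigh a hsa

lemma L5 (h : Setup n k x i ℓ) {σ : A → ℤ}
    (hσ : σ ∈ NN n k x i ℓ (-1) false true) :
    ⇑(Equiv.swap (i ℓ) (i ℓ + 1)) ∘ σ ∈ NN n k x i ℓ (-1) true false := by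
  obtain ⟨hN, hlow, hhigh⟩ := hσ
  simp only [lowPos, highPos] at hlow hhigh
  norm_num at hlow hhigh
  have hle := hN.1
  have hxl : σ (x ℓ) = i ℓ - 1 := by have := hN.2.2; omega
  obtain ⟨a₀, ha₀⟩ := linext_surj h.hcard hle (p := i ℓ)
    (by have := low_bound h; omega) (by have := high_bound h; omega)
  obtain ⟨b₀, hb₀⟩ := linext_surj h.hcard hle (p := i ℓ + 1)
    (by have := low_bound h; omega) (high_bound h)
  have hcomp : ¬ Incomp a₀ (x ℓ) := hlow a₀ ha₀
  have hbinc : Incomp b₀ (x ℓ) := hhigh b₀ hb₀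
  have h1 : x ℓ ≤ a₀ := by
    by_contra hx
    refine hcomp ⟨fun h2 => ?_, hx⟩
    have := hN.1.2.2 a₀ (x ℓ) h2
    omega
  have hab : ¬ a₀ ≤ b₀ := fun h2 => hbinc.2 (h1.trans h2)
  have hswap := swap_linext hle rfl (by have := low_bound h; omega)
    (high_bound h) ha₀ hb₀ hab
  refine ⟨N_transfer h rfl (by omega) le_rfl hN hswap ?_, ?_, ?_⟩
  · exact Equiv.swap_apply_of_ne_of_ne (by omega) (by omega)
  · intro a hva
    simp only [lowPos] at hva; norm_num at hva
    have hsa := swap_comp_eq hva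
    rw [Equiv.swap_apply_left] at hsa
    simpa using hhigh a hsa
  · intro a hva
    simp only [highPos] at hva; norm_num at hva
    have hsa := swap_comp_eq hva
    rw [Equiv.swap_apply_right] at hsa
    simpa using hlow a hsa

lemma L6 (h : Setup n k x i ℓ) {σ : A → ℤ}
    (hσ : σ ∈ NN n k x i ℓ 1 true false) :
    ⇑(Equiv.swap (i ℓ - 1) (i ℓ)) ∘ σ ∈ NN n k x i ℓ 1 false true := by
  obtain ⟨hN, hlow, hhigh⟩ := hσ
  simp only [lowPos, highPos] at hlow hhigh
  norm_num at hlow hhigh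
  have hle := hN.1
  have hxl : σ (x ℓ) = i ℓ + 1 := hN.2.2
  obtain ⟨b₀, hb₀⟩ := linext_surj h.hcard hle (p := i ℓ - 1)
    (low_bound h) (by have := high_bound h; omega)
  obtain ⟨a₀, ha₀⟩ := linext_surj h.hcard hle (p := i ℓ)
    (by have := low_bound h; omega) (by have := high_bound h; omega)
  have hbinc : Incomp b₀ (x ℓ) := hlow b₀ hb₀
  have hcomp : ¬ Incomp a₀ (x ℓ) := hhigh a₀ ha₀
  have h1 : a₀ ≤ x ℓ := by
    by_contra hx
    refine hcomp ⟨hx, fun h2 => ?_⟩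
    have := hN.1.2.2 (x ℓ) a₀ h2
    omega
  have hab : ¬ b₀ ≤ a₀ := fun h2 => hbinc.1 (h2.trans h1)
  have hswap := swap_linext hle (show i ℓ = i ℓ - 1 + 1 by ring) (low_bound h)
    (by have := high_bound h; omega) hb₀ ha₀ hab
  refine ⟨N_transfer h (by ring) le_rfl (by omega) hN hswap ?_, ?_, ?_⟩
  · exact Equiv.swap_apply_of_ne_of_ne (by omega) (by omega)
  · intro a hva
    simp only [lowPos] at hva; norm_num at hva
    have hsa := swap_comp_eq hva
    rw [Equiv.swap_apply_left] at hsa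
    simpa using hhigh a hsa
  · intro a hva
    simp only [highPos] at hva; norm_num at hva
    have hsa := swap_comp_eq hva
    rw [Equiv.swap_apply_right] at hsa
    simpa using hlow a hsa

end Aux

/-- **Decomposition identities for linear extensions** (Lemma 3.1).
(i) `|N₋(≁,≁)| = |N₌(≁,≁)| = |N₊(≁,≁)|`; (ii) `|N₋(≁,∼)| = |N₌(≁,∼)|`;
(iii) `|N₌(∼,≁)| = |N₊(∼,≁)|`; (iv) `|N₋(∼,≁)| ≤ |N₋(≁,∼)|`;
(v) `|N₊(≁,∼)| ≤ |N₊(∼,≁)|`. -/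
theorem decomposition_identities
    {A : Type*} [PartialOrder A] [Fintype A]
    (n k : ℕ) (x : ℤ → A) (i : ℤ → ℤ) (ℓ : ℤ)
    (hsetup : Setup n k x i ℓ) :
    ((NN n k x i ℓ (-1) true true).ncard = (NN n k x i ℓ 0 true true).ncard ∧
      (NN n k x i ℓ 0 true true).ncard = (NN n k x i ℓ 1 true true).ncard) ∧
    (NN n k x i ℓ (-1) true false).ncard = (NN n k x i ℓ 0 true false).ncard ∧
    (NN n k x i ℓ 0 false true).ncard = (NN n k x i ℓ 1 false true).ncard ∧
    (NN n k x i ℓ (-1) false true).ncard ≤ (NN n k x i ℓ (-1) true false).ncard ∧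
    (NN n k x i ℓ 1 true false).ncard ≤ (NN n k x i ℓ 1 false true).ncard := by
  refine ⟨⟨?_, ?_⟩, ?_, ?_, ?_, ?_⟩
  · exact ncard_eq_of_swap (fun σ hσ => L1 hsetup true hσ) (fun σ hσ => L2 hsetup true hσ)
  · exact ncard_eq_of_swap (fun σ hσ => L3 hsetup true hσ) (fun σ hσ => L4 hsetup true hσ)
  · exact ncard_eq_of_swap (fun σ hσ => L1 hsetup false hσ) (fun σ hσ => L2 hsetup false hσ)
  · exact ncard_eq_of_swap (fun σ hσ => L3 hsetup false hσ) (fun σ hσ => L4 hsetup false hσ)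
  · exact ncard_le_of_swap (NN_finite (-1) true false) (fun σ hσ => L5 hsetup hσ)
  · exact ncard_le_of_swap (NN_finite 1 false true) (fun σ hσ => L6 hsetup hσ)

end Stanley
end

section
/- (Linear span of Minkowski sums of the polytopes K_i.) Let j_0 := −1 < j_1 < ⋯ < j_p < k+1 =: j_{p+1} with j_1,…,j_p ∈ {0,…,k}, let κ_1,…,κ_p be positive integers, and let K′ be the Minkowski sum of κ_q copies of K_{j_q} over q = 1,…,p. Then Lin(K′) = ℝ^{β_S} := {t ∈ ℝ^α : t_j = 0 for all y_j ∉ β_S}, where S := {j_1,…,j_p}, and consequently dim K′ = n − k − Σ_{q=0}^{p} |α_{>x_{j_q+1},<x_{j_{q+1}}}|. -/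
open Pointwise

namespace Stanley

variable {A : Type*}

section AuxLemmas

open Finset

variable [PartialOrder A] {k : ℕ} {x : ℤ → A}

lemma chain_le (hc : ∀ j j' : ℤ, 1 ≤ j → j < j' → j' ≤ (k : ℤ) → x j < x j')
    {r r' : ℤ} (h1 : 1 ≤ r) (h2 : r ≤ r') (h3 : r' ≤ (k : ℤ)) : x r ≤ x r' := by
  rcases eq_or_lt_of_le h2 with h | h
  · rw [h]
  · exact (hc r r' h1 h h3).le

lemma gtX_mono (hc : ∀ j j' : ℤ, 1 ≤ j → j < j' → j' ≤ (k : ℤ) → x j < x j')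
    {r r' : ℤ} {a : A} (h : gtX k x r a) (h0 : 0 ≤ r') (hr : r' ≤ r) : gtX k x r' a := by
  rcases h with h | ⟨h1, h2, h3⟩
  · left; omega
  · rcases eq_or_lt_of_le h0 with h0' | h0'
    · left; omega
    · exact Or.inr ⟨by omega, by omega, lt_of_le_of_lt (chain_le hc (by omega) hr h2) h3⟩

lemma ltX_mono (hc : ∀ j j' : ℤ, 1 ≤ j → j < j' → j' ≤ (k : ℤ) → x j < x j')
    {s s' : ℤ} {a : A} (h : ltX k x s a) (hs : s ≤ s') (h' : s' ≤ (k : ℤ) + 1) :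
    ltX k x s' a := by
  rcases h with h | ⟨h1, h2, h3⟩
  · left; omega
  · rcases eq_or_lt_of_le h' with h'' | h''
    · left; exact h''
    · exact Or.inr ⟨by omega, by omega, lt_of_lt_of_le h3 (chain_le hc h1 hs (by omega))⟩

lemma gtX_of_le {r : ℤ} {a b : A} (hab : a ≤ b) (h : gtX k x r a) : gtX k x r b := by
  rcases h with h | ⟨h1, h2, h3⟩
  · exact Or.inl h
  · exact Or.inr ⟨h1, h2, lt_of_lt_of_le h3 hab⟩

lemma ltX_of_ge {s : ℤ} {a b : A} (hab : a ≤ b) (h : ltX k x s b) : ltX k x s a := by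
  rcases h with h | ⟨h1, h2, h3⟩
  · exact Or.inl h
  · exact Or.inr ⟨h1, h2, lt_of_le_of_lt hab h3⟩

lemma not_gtX_ltX_self {r : ℤ} {a : A} (h1 : gtX k x r a) (h2 : ltX k x r a) : False := by
  rcases h1 with h | ⟨g1, g2, g3⟩
  · rcases h2 with h' | ⟨l1, l2, l3⟩ <;> omega
  · rcases h2 with h' | ⟨l1, l2, l3⟩
    · omega
    · exact lt_asymm g3 l3

lemma not_ltX_gtX_succ (hc : ∀ j j' : ℤ, 1 ≤ j → j < j' → j' ≤ (k : ℤ) → x j < x j')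
    {m : ℤ} {a : A} (hm : m ≤ (k : ℤ)) (h1 : ltX k x m a) (h2 : gtX k x (m + 1) a) :
    False := by
  rcases h1 with h | ⟨l1, l2, l3⟩
  · omega
  · rcases h2 with h' | ⟨g1, g2, g3⟩
    · omega
    · exact lt_irrefl _ ((hc m (m + 1) l1 (by omega) g2).trans (g3.trans l3))

lemma beta_or {m : ℤ} {a : A} (hm0 : 0 ≤ m) (hmk : m ≤ (k : ℤ)) (ha : a ∈ alphaSet k x) :
    a ∈ beta k x m ∨ ltX k x m a ∨ gtX k x (m + 1) a := by
  by_cases h1 : ltX k x m a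
  · exact Or.inr (Or.inl h1)
  by_cases h2 : gtX k x (m + 1) a
  · exact Or.inr (Or.inr h2)
  exact Or.inl ⟨⟨hm0, hmk⟩, ha, h1, h2⟩

open scoped Classical in
lemma mk_mem_Kpoly (hc : ∀ j j' : ℤ, 1 ≤ j → j < j' → j' ≤ (k : ℤ) → x j < x j')
    {m : ℤ} (hm0 : 0 ≤ m) (hmk : m ≤ (k : ℤ)) (f : A → ℝ)
    (hf0 : ∀ a ∈ beta k x m, 0 ≤ f a) (hf1 : ∀ a ∈ beta k x m, f a ≤ 1)
    (hfm : ∀ a b : A, a ∈ beta k x m → b ∈ beta k x m → a ≤ b → f a ≤ f b) :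
    (fun a => if a ∈ alphaSet k x ∧ gtX k x (m + 1) a then (1 : ℝ)
      else if a ∈ beta k x m then f a else 0) ∈ Kpoly k x m := by
  have hb01 : ∀ c : A,
      0 ≤ (if c ∈ alphaSet k x ∧ gtX k x (m + 1) c then (1 : ℝ)
        else if c ∈ beta k x m then f c else 0) ∧
      (if c ∈ alphaSet k x ∧ gtX k x (m + 1) c then (1 : ℝ)
        else if c ∈ beta k x m then f c else 0) ≤ 1 := by
    intro c
    split_ifs with h1 h2
    · norm_num
    · exact ⟨hf0 c h2, hf1 c h2⟩
    · norm_num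
  refine ⟨⟨?_, ?_, ?_⟩, ?_, ?_⟩
  · intro a ha
    dsimp only
    rw [if_neg (fun h => ha h.1), if_neg (fun h => ha h.2.1)]
  · intro a _
    exact hb01 a
  · intro a b hain hbin hab
    dsimp only
    by_cases hb1 : b ∈ alphaSet k x ∧ gtX k x (m + 1) b
    · rw [if_pos hb1]
      exact (hb01 a).2
    · rw [if_neg hb1]
      by_cases ha1 : a ∈ alphaSet k x ∧ gtX k x (m + 1) a
      · exact absurd ⟨hbin, gtX_of_le hab ha1.2⟩ hb1
      · rw [if_neg ha1]
        by_cases ha2 : a ∈ beta k x m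
        · have hb2 : b ∈ beta k x m := by
            rcases beta_or hm0 hmk hbin with h | h | h
            · exact h
            · exact absurd (ltX_of_ge hab h) ha2.2.2.1
            · exact absurd ⟨hbin, h⟩ hb1
          rw [if_pos ha2, if_pos hb2]
          exact hfm a b ha2 hb2 hab
        · rw [if_neg ha2]
          by_cases hb2 : b ∈ beta k x m
          · rw [if_pos hb2]; exact hf0 b hb2
          · rw [if_neg hb2]
  · intro a ha hlt
    dsimp only
    rw [if_neg (fun h => not_ltX_gtX_succ hc hmk hlt h.2),
      if_neg (fun h => h.2.2.1 hlt)]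
  · intro a ha hgt
    dsimp only
    exact if_pos ⟨ha, hgt⟩

end AuxLemmas

section SumSets

lemma sum_sets_mem {ι M : Type*} [AddCommMonoid M] {s : Finset ι} {f : ι → Set M}
    {g : ι → M} : (∀ q ∈ s, g q ∈ f q) → ∑ q ∈ s, g q ∈ ∑ q ∈ s, f q := by
  classical
  induction s using Finset.induction_on with
  | empty => intro _; simp only [Finset.sum_empty]; exact Set.mem_zero.2 rfl
  | @insert b s hb ih =>
    intro h
    rw [Finset.sum_insert hb, Finset.sum_insert hb]
    exact Set.add_mem_add (h b (Finset.mem_insert_self b s))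
      (ih fun q hq => h q (Finset.mem_insert_of_mem hq))

lemma sum_sets_apply {ι : Type*} {s : Finset ι} {f : ι → Set (A → ℝ)} {v : ι → ℝ} {a : A} :
    (∀ q ∈ s, ∀ u ∈ f q, u a = v q) → ∀ t ∈ ∑ q ∈ s, f q, t a = ∑ q ∈ s, v q := by
  classical
  induction s using Finset.induction_on with
  | empty =>
    intro _ t ht
    rw [Finset.sum_empty] at ht
    rw [Set.mem_zero.1 ht, Finset.sum_empty, Pi.zero_apply]
  | @insert b s hb ih =>
    intro h t ht
    rw [Finset.sum_insert hb] at ht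
    obtain ⟨u, hu, w, hw, rfl⟩ := Set.mem_add.1 ht
    rw [Finset.sum_insert hb, Pi.add_apply, h b (Finset.mem_insert_self b s) u hu,
      ih (fun q hq => h q (Finset.mem_insert_of_mem hq)) w hw]

end SumSets

/-- The submodule of functions supported on `s`. -/
def suppSubmodule (s : Set A) : Submodule ℝ (A → ℝ) where
  carrier := { t | ∀ a : A, a ∉ s → t a = 0 }
  add_mem' := fun hu hv a ha => by
    simp only [Pi.add_apply, hu a ha, hv a ha, add_zero]
  zero_mem' := fun a _ => rfl
  smul_mem' := fun c u hu a ha => by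
    simp only [Pi.smul_apply, hu a ha, smul_eq_mul, mul_zero]

theorem mem_suppSubmodule {s : Set A} {t : A → ℝ} :
    t ∈ suppSubmodule s ↔ ∀ a ∉ s, t a = 0 := Iff.rfl

lemma finrank_suppSubmodule [Fintype A] (s : Set A) :
    Module.finrank ℝ ↥(suppSubmodule s) = s.ncard := by
  classical
  haveI : Fintype ↥s := (Set.toFinite s).fintype
  let e : ↥(suppSubmodule s) ≃ₗ[ℝ] (↥s → ℝ) :=
    { toFun := fun t a => (t : A → ℝ) a
      map_add' := fun u v => rfl
      map_smul' := fun c u => rfl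
      invFun := fun f => ⟨fun a => if h : a ∈ s then f ⟨a, h⟩ else 0, fun a ha => dif_neg ha⟩
      left_inv := fun t => by
        ext a
        by_cases h : a ∈ s
        · simp [h]
        · simp [h, t.2 a h]
      right_inv := fun f => by
        ext a
        exact dif_pos a.2 }
  rw [e.finrank_eq, Module.finrank_fintype_fun_eq_card, Set.ncard_eq_toFinset_card',
    Set.toFinset_card]

open scoped Classical in
lemma single_mem_of_chi [PartialOrder A] [Fintype A] (V : Submodule ℝ (A → ℝ)) (β : Set A)
    (hχ : ∀ b ∈ β, (fun c => if c ∈ β ∧ b ≤ c then (1 : ℝ) else 0) ∈ V) :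
    ∀ b ∈ β, Pi.single b (1 : ℝ) ∈ V := by
  suffices h : ∀ N : ℕ, ∀ b ∈ β,
      (Finset.univ.filter fun c => c ∈ β ∧ b ≤ c).card ≤ N → Pi.single b (1 : ℝ) ∈ V by
    intro b hb; exact h _ b hb le_rfl
  intro N
  induction N with
  | zero =>
    intro b hb h0
    have hbmem : b ∈ Finset.univ.filter (fun c => c ∈ β ∧ b ≤ c) :=
      Finset.mem_filter.2 ⟨Finset.mem_univ _, hb, le_refl b⟩
    have := Finset.card_pos.2 ⟨b, hbmem⟩
    omega
  | succ N ih =>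
    intro b hb hcard
    set T : Finset A := Finset.univ.filter (fun c => c ∈ β ∧ b ≤ c) with hT
    have hbT : b ∈ T := Finset.mem_filter.2 ⟨Finset.mem_univ _, hb, le_refl b⟩
    have h1 : ∀ c, (∑ c' ∈ T, Pi.single c' (1 : ℝ)) c =
        if c ∈ β ∧ b ≤ c then (1 : ℝ) else 0 := by
      intro c
      rw [Finset.sum_apply]
      simp only [Pi.single_apply]
      rw [Finset.sum_ite_eq T c (fun _ => (1 : ℝ))]
      by_cases h : c ∈ β ∧ b ≤ c
      · rw [if_pos h]
        have hcT : c ∈ T := Finset.mem_filter.2 ⟨Finset.mem_univ c, h⟩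
        exact if_pos hcT
      · rw [if_neg h]
        have hcT : c ∉ T := fun hc => h (Finset.mem_filter.1 hc).2
        exact if_neg hcT
    have hchi_eq : (fun c => if c ∈ β ∧ b ≤ c then (1 : ℝ) else 0) =
        ∑ c' ∈ T, Pi.single c' (1 : ℝ) := funext fun c => (h1 c).symm
    have hrest : ∀ c ∈ T.erase b, Pi.single c (1 : ℝ) ∈ V := by
      intro c hc
      obtain ⟨hne, hcT⟩ := Finset.mem_erase.1 hc
      have hcβ : c ∈ β := (Finset.mem_filter.1 hcT).2.1
      have hbc : b ≤ c := (Finset.mem_filter.1 hcT).2.2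
      apply ih c hcβ
      have hsub : (Finset.univ.filter fun d => d ∈ β ∧ c ≤ d) ⊆ T.erase b := by
        intro d hd
        obtain ⟨_, hdβ, hcd⟩ := Finset.mem_filter.1 hd
        refine Finset.mem_erase.2 ⟨?_, Finset.mem_filter.2
          ⟨Finset.mem_univ _, hdβ, le_trans hbc hcd⟩⟩
        rintro rfl
        exact hne (le_antisymm hcd hbc)
      have h2 := Finset.card_le_card hsub
      rw [Finset.card_erase_of_mem hbT] at h2
      omega
    have hsplit : Pi.single b (1 : ℝ) =
        (fun c => if c ∈ β ∧ b ≤ c then (1 : ℝ) else 0) -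
          ∑ c' ∈ T.erase b, Pi.single c' (1 : ℝ) := by
      rw [hchi_eq, ← Finset.add_sum_erase T _ hbT]
      exact (add_sub_cancel_right _ _).symm
    rw [hsplit]
    exact sub_mem (hχ b hb) (Submodule.sum_mem _ hrest)


/-- **Linear span of Minkowski sums of the polytopes `K_i`** (Lemma 5.2).
For `j_0 = -1 < j_1 < ⋯ < j_p < k+1 = j_{p+1}` and positive integers `κ_1,…,κ_p`,
the Minkowski sum `K' = Σ_q κ_q·K_{j_q}` satisfies `Lin(K') = ℝ^{β_S}` for
`S = {j_1,…,j_p}`, and `dim K' = n - k - Σ_{q=0}^p |α_{>x_{j_q+1},<x_{j_{q+1}}}|`. -/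
theorem span_of_sum_of_K_polytopes
    {A : Type*} [PartialOrder A] [Fintype A]
    (n k : ℕ) (x : ℤ → A) (i : ℤ → ℤ) (ℓ : ℤ)
    (hsetup : Setup n k x i ℓ)
    (p : ℕ) (hp : 1 ≤ p) (j : ℕ → ℤ)
    (hj0 : j 0 = -1) (hjtop : j (p + 1) = (k : ℤ) + 1)
    (hjmono : ∀ q : ℕ, q ≤ p → j q < j (q + 1))
    (hjrange : ∀ q : ℕ, 1 ≤ q → q ≤ p → 0 ≤ j q ∧ j q ≤ (k : ℤ))
    (κ : ℕ → ℕ) (hκ : ∀ q : ℕ, 1 ≤ q → q ≤ p → 1 ≤ κ q) :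
    (↑(vectorSpan ℝ (∑ q ∈ Finset.Icc 1 p, ∑ _m ∈ Finset.range (κ q), Kpoly k x (j q))) :
        Set (A → ℝ)) =
      { t : A → ℝ | ∀ a : A, a ∉ (⋃ q ∈ Finset.Icc 1 p, beta k x (j q)) → t a = 0 } ∧
    (Module.finrank ℝ ↥(vectorSpan ℝ
        (∑ q ∈ Finset.Icc 1 p, ∑ _m ∈ Finset.range (κ q), Kpoly k x (j q))) : ℤ) =
      (n : ℤ) - (k : ℤ) -
        ∑ q ∈ Finset.range (p + 1), ((betwA k x (j q + 1) (j (q + 1))).ncard : ℤ) := by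
  classical
  obtain ⟨hk1, hkn, hcardA, hc, hi0, hitop, himono, hi1, hik, hl1, hlk, hg1, hg2⟩ := hsetup
  have hjle : ∀ q q' : ℕ, q ≤ q' → q' ≤ p + 1 → j q ≤ j q' := by
    have key : ∀ d : ℕ, ∀ q : ℕ, q + d ≤ p + 1 → j q ≤ j (q + d) := by
      intro d
      induction d with
      | zero => intro q _; exact le_refl _
      | succ d ihd =>
        intro q h
        have h1 : j q ≤ j (q + d) := ihd q (by omega)
        have h2 : j (q + d) < j (q + d + 1) := hjmono (q + d) (by omega)
        exact h1.trans h2.le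
    intro q q' h1 h2
    have := key (q' - q) q (by omega)
    rwa [Nat.add_sub_cancel' h1] at this
  set S : Finset ℕ := Finset.Icc 1 p with hS
  have hjq0 : ∀ q ∈ S, 0 ≤ j q ∧ j q ≤ (k : ℤ) := by
    intro q hq
    obtain ⟨h1, h2⟩ := Finset.mem_Icc.1 hq
    exact hjrange q h1 h2
  set KS : Set (A → ℝ) := ∑ q ∈ S, ∑ _m ∈ Finset.range (κ q), Kpoly k x (j q) with hKS
  set βS : Set A := ⋃ q ∈ S, beta k x (j q) with hβS
  obtain ⟨B, hbase⟩ : ∃ B : ℕ → (A → ℝ), ∀ q ∈ S, B q ∈ Kpoly k x (j q) :=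
    ⟨fun q a => if a ∈ alphaSet k x ∧ gtX k x (j q + 1) a then (1 : ℝ)
        else if a ∈ beta k x (j q) then 1 / 2 else 0,
      fun q hq => mk_mem_Kpoly hc (hjq0 q hq).1 (hjq0 q hq).2 (fun _ => 1 / 2)
        (fun a _ => by norm_num) (fun a _ => by norm_num) (fun a b _ _ _ => le_refl _)⟩
  have hKdet : ∀ q ∈ S, ∀ u ∈ Kpoly k x (j q), ∀ a : A, a ∉ beta k x (j q) →
      u a = (if a ∈ alphaSet k x ∧ gtX k x (j q + 1) a then (1 : ℝ) else 0) := by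
    intro q hq u hu a hab
    obtain ⟨⟨hz, hbnd, hmono⟩, hlt0, hgt1⟩ := hu
    by_cases hα : a ∈ alphaSet k x
    · rcases beta_or (hjq0 q hq).1 (hjq0 q hq).2 hα with h | h | h
      · exact absurd h hab
      · rw [hlt0 a hα h, if_neg (fun hh => not_ltX_gtX_succ hc (hjq0 q hq).2 h hh.2)]
      · rw [hgt1 a hα h, if_pos ⟨hα, h⟩]
    · rw [hz a hα, if_neg (fun hh => hα hh.1)]
  have hsubmem : ∀ q₀ ∈ S, ∀ u v : A → ℝ, u ∈ Kpoly k x (j q₀) → v ∈ Kpoly k x (j q₀) →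
      u - v ∈ vectorSpan ℝ KS := by
    intro q₀ hq₀ u v hu hv
    have hκ0 : 0 ∈ Finset.range (κ q₀) := by
      obtain ⟨h1, h2⟩ := Finset.mem_Icc.1 hq₀
      exact Finset.mem_range.2 (hκ q₀ h1 h2)
    have hTu : (∑ q ∈ S, ∑ m ∈ Finset.range (κ q),
        (if q = q₀ ∧ m = 0 then u else B q)) ∈ KS := by
      refine sum_sets_mem (fun q hq => sum_sets_mem (fun m _ => ?_))
      by_cases h : q = q₀ ∧ m = 0
      · rw [if_pos h, h.1]; exact hu
      · rw [if_neg h]; exact hbase q hq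
    have hTv : (∑ q ∈ S, ∑ m ∈ Finset.range (κ q),
        (if q = q₀ ∧ m = 0 then v else B q)) ∈ KS := by
      refine sum_sets_mem (fun q hq => sum_sets_mem (fun m _ => ?_))
      by_cases h : q = q₀ ∧ m = 0
      · rw [if_pos h, h.1]; exact hv
      · rw [if_neg h]; exact hbase q hq
    have hdiff : (∑ q ∈ S, ∑ m ∈ Finset.range (κ q), (if q = q₀ ∧ m = 0 then u else B q)) -
        (∑ q ∈ S, ∑ m ∈ Finset.range (κ q), (if q = q₀ ∧ m = 0 then v else B q)) = u - v := by
      rw [← Finset.sum_sub_distrib]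
      rw [Finset.sum_eq_single q₀]
      · rw [← Finset.sum_sub_distrib, Finset.sum_eq_single 0]
        · rw [if_pos ⟨rfl, rfl⟩, if_pos ⟨rfl, rfl⟩]
        · intro m _ hm
          rw [if_neg (fun h => hm h.2), if_neg (fun h => hm h.2), sub_self]
        · intro h; exact absurd hκ0 h
      · intro q _ hq
        rw [← Finset.sum_sub_distrib]
        refine Finset.sum_eq_zero (fun m _ => ?_)
        rw [if_neg (fun h => hq h.1), if_neg (fun h => hq h.1), sub_self]
      · intro h; exact absurd hq₀ h
    rw [vectorSpan_def]
    refine Submodule.subset_span ?_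
    rw [← hdiff, ← vsub_eq_sub]
    exact Set.vsub_mem_vsub hTu hTv
  have hchi : ∀ q ∈ S, ∀ b ∈ beta k x (j q),
      (fun c => if c ∈ beta k x (j q) ∧ b ≤ c then (1 : ℝ) else 0) ∈ vectorSpan ℝ KS := by
    intro q hq b hb
    have hg : (fun a => if a ∈ alphaSet k x ∧ gtX k x (j q + 1) a then (1 : ℝ)
        else if a ∈ beta k x (j q) then (if b ≤ a then 1 else 1 / 2) else 0) ∈
        Kpoly k x (j q) := by
      refine mk_mem_Kpoly hc (hjq0 q hq).1 (hjq0 q hq).2 _ ?_ ?_ ?_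
      · intro a _; split_ifs <;> norm_num
      · intro a _; split_ifs <;> norm_num
      · intro a a' _ _ haa'
        split_ifs with h1 h2 h3
        · exact le_refl _
        · exact absurd (h1.trans haa') h2
        · norm_num
        · exact le_refl _
    have hv : (fun a => if a ∈ alphaSet k x ∧ gtX k x (j q + 1) a then (1 : ℝ)
        else if a ∈ beta k x (j q) then 1 / 2 else 0) ∈ Kpoly k x (j q) :=
      mk_mem_Kpoly hc (hjq0 q hq).1 (hjq0 q hq).2 (fun _ => 1 / 2)
        (fun a _ => by norm_num) (fun a _ => by norm_num) (fun a b _ _ _ => le_refl _)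
    have heq : (fun c => if c ∈ beta k x (j q) ∧ b ≤ c then (1 : ℝ) else 0) =
        (2 : ℝ) • ((fun a => if a ∈ alphaSet k x ∧ gtX k x (j q + 1) a then (1 : ℝ)
          else if a ∈ beta k x (j q) then (if b ≤ a then 1 else 1 / 2) else 0) -
        (fun a => if a ∈ alphaSet k x ∧ gtX k x (j q + 1) a then (1 : ℝ)
          else if a ∈ beta k x (j q) then 1 / 2 else 0)) := by
      funext a
      simp only [Pi.smul_apply, Pi.sub_apply, smul_eq_mul]
      by_cases h1 : a ∈ alphaSet k x ∧ gtX k x (j q + 1) a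
      · rw [if_pos h1, if_pos h1, if_neg (fun h => h.1.2.2.2 h1.2)]
        norm_num
      · rw [if_neg h1, if_neg h1]
        by_cases h2 : a ∈ beta k x (j q)
        · rw [if_pos h2, if_pos h2]
          by_cases h3 : b ≤ a
          · rw [if_pos ⟨h2, h3⟩, if_pos h3]
            norm_num
          · rw [if_neg (fun h => h3 h.2), if_neg h3]
            norm_num
        · rw [if_neg h2, if_neg h2, if_neg (fun h => h2 h.1)]
          norm_num
    rw [heq]
    exact Submodule.smul_mem _ _ (hsubmem q hq _ _ hg hv)
  have hsingle : ∀ a : A, a ∈ βS → Pi.single a (1 : ℝ) ∈ vectorSpan ℝ KS := by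
    intro a ha
    obtain ⟨q, hq, hab⟩ := Set.mem_iUnion₂.1 ha
    exact single_mem_of_chi _ _ (hchi q hq) a hab
  have hspan : vectorSpan ℝ KS = suppSubmodule βS := by
    apply le_antisymm
    · rw [vectorSpan_def, Submodule.span_le]
      rintro w hw
      obtain ⟨t, ht, t', ht', rfl⟩ := Set.mem_vsub.1 hw
      rw [SetLike.mem_coe, mem_suppSubmodule]
      intro a ha
      have hval : ∀ u ∈ KS, u a = ∑ q ∈ S,
          (κ q : ℝ) * (if a ∈ alphaSet k x ∧ gtX k x (j q + 1) a then (1 : ℝ) else 0) := by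
        intro u hu
        refine sum_sets_apply ?_ u hu
        intro q hq w' hw'
        have hnb : a ∉ beta k x (j q) := fun hmem => ha (Set.mem_iUnion₂.2 ⟨q, hq, hmem⟩)
        have hinner := sum_sets_apply (fun m _ => fun u' hu' => hKdet q hq u' hu' a hnb) w' hw'
        rw [hinner, Finset.sum_const, Finset.card_range, nsmul_eq_mul]
      rw [vsub_eq_sub, Pi.sub_apply, hval t ht, hval t' ht', sub_self]
    · rintro t ht
      rw [mem_suppSubmodule] at ht
      rw [pi_eq_sum_univ t]
      refine Submodule.sum_mem _ (fun a _ => ?_)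
      by_cases haS : a ∈ βS
      · refine Submodule.smul_mem _ _ ?_
        have hsingle_eq : (fun c => if a = c then (1 : ℝ) else 0) = Pi.single a 1 := by
          funext c
          rw [Pi.single_apply]
          by_cases h : a = c
          · rw [if_pos h, if_pos h.symm]
          · rw [if_neg h, if_neg (fun hh => h hh.symm)]
        rw [hsingle_eq]
        exact hsingle a haS
      · rw [ht a haS, zero_smul]
        exact zero_mem _
  constructor
  · rw [hspan]
    rfl
  · rw [hspan, finrank_suppSubmodule]
    have hncard : ∀ s : Set A, s.ncard = (Finset.univ.filter (· ∈ s)).card := by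
      intro s
      rw [Set.ncard_eq_toFinset_card' s]
      congr 1
      ext a
      simp
    have hinj : Set.InjOn x ↑(Finset.Icc (1 : ℤ) (k : ℤ)) := by
      intro r hr r' hr' heq
      simp only [Finset.coe_Icc, Set.mem_Icc] at hr hr'
      by_contra hne
      rcases lt_or_gt_of_ne hne with h | h
      · exact absurd heq (ne_of_lt (hc r r' hr.1 h hr'.2))
      · exact absurd heq.symm (ne_of_lt (hc r' r hr'.1 h hr.2))
    set chainF : Finset A := (Finset.Icc (1 : ℤ) (k : ℤ)).image x with hchainF
    have hchaincard : chainF.card = k := by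
      rw [hchainF, Finset.card_image_of_injOn hinj, Int.card_Icc]
      omega
    have halpha_iff : ∀ a : A, a ∈ alphaSet k x ↔ a ∉ chainF := by
      intro a
      constructor
      · intro h hmem
        obtain ⟨r, hr, heq⟩ := Finset.mem_image.1 hmem
        obtain ⟨h1, h2⟩ := Finset.mem_Icc.1 hr
        exact h r h1 h2 heq.symm
      · intro h r h1 h2 heq
        exact h (Finset.mem_image.2 ⟨r, Finset.mem_Icc.2 ⟨h1, h2⟩, heq.symm⟩)
    have hαcompl : (Finset.univ.filter (· ∈ alphaSet k x)) = chainFᶜ := by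
      ext a
      simp only [Finset.mem_filter, Finset.mem_univ, true_and, Finset.mem_compl]
      exact halpha_iff a
    have hcarduniv : chainF.card + (Finset.univ.filter (· ∈ alphaSet k x)).card = n := by
      rw [hαcompl, Finset.card_add_card_compl, hcardA]
    have hcoverset : ∀ a ∈ alphaSet k x, (∃ q ∈ S, a ∈ beta k x (j q)) ∨
        ∃ q ∈ Finset.range (p + 1), a ∈ betwA k x (j q + 1) (j (q + 1)) := by
      intro a ha
      set Q : Finset ℕ := (Finset.range (p + 2)).filter (fun q => gtX k x (j q + 1) a) with hQ
      have h0Q : 0 ∈ Q := by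
        refine Finset.mem_filter.2 ⟨Finset.mem_range.2 (by omega), ?_⟩
        rw [hj0]
        left
        ring
      have hQne : Q.Nonempty := ⟨0, h0Q⟩
      have hq₀Q : Q.max' hQne ∈ Q := Q.max'_mem hQne
      set q₀ := Q.max' hQne with hq₀def
      have hq₀r : q₀ < p + 2 := Finset.mem_range.1 (Finset.mem_filter.1 hq₀Q).1
      have hq₀gt : gtX k x (j q₀ + 1) a := (Finset.mem_filter.1 hq₀Q).2
      have hq₀p : q₀ ≤ p := by
        by_contra h
        have heq : q₀ = p + 1 := by omega
        rw [heq, hjtop] at hq₀gt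
        rcases hq₀gt with h' | ⟨_, h2, _⟩ <;> omega
      have hnot : ¬ gtX k x (j (q₀ + 1) + 1) a := by
        intro h
        have hmem : q₀ + 1 ∈ Q := Finset.mem_filter.2 ⟨Finset.mem_range.2 (by omega), h⟩
        have := Q.le_max' _ hmem
        omega
      by_cases hlt : ltX k x (j (q₀ + 1)) a
      · exact Or.inr ⟨q₀, Finset.mem_range.2 (by omega), ha, hq₀gt, hlt⟩
      · have hq1p : q₀ + 1 ≤ p := by
          by_contra h
          have heq : q₀ + 1 = p + 1 := by omega
          exact hlt (by rw [heq, hjtop]; left; rfl)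
        exact Or.inl ⟨q₀ + 1, Finset.mem_Icc.2 ⟨by omega, hq1p⟩,
          ⟨⟨(hjrange (q₀ + 1) (by omega) hq1p).1, (hjrange (q₀ + 1) (by omega) hq1p).2⟩,
            ha, hlt, hnot⟩⟩
    have hdisjBP : ∀ a : A, ∀ q' ∈ S, a ∈ beta k x (j q') →
        ∀ q ∈ Finset.range (p + 1), a ∉ betwA k x (j q + 1) (j (q + 1)) := by
      rintro a q' hq' hbmem q hqr ⟨hα2, hgt, hlt⟩
      obtain ⟨⟨hj0', hjk'⟩, _, hnlt, hngt⟩ := hbmem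
      obtain ⟨hq'1, hq'p⟩ := Finset.mem_Icc.1 hq'
      have hqp : q < p + 1 := Finset.mem_range.1 hqr
      rcases le_or_gt q' q with h | h
      · have hle : j q' ≤ j q := hjle q' q h (by omega)
        exact hngt (gtX_mono hc hgt (by omega) (by omega))
      · have hle : j (q + 1) ≤ j q' := hjle (q + 1) q' h (by omega)
        exact hnlt (ltX_mono hc hlt hle (by omega))
    have hdisjPP : ∀ q1 q2 : ℕ, q1 < q2 → q2 < p + 1 → ∀ a : A,
        a ∈ betwA k x (j q1 + 1) (j (q1 + 1)) →
        a ∈ betwA k x (j q2 + 1) (j (q2 + 1)) → False := by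
      rintro q1 q2 h12 h2p a ⟨_, _, hlt1⟩ ⟨_, hgt2, _⟩
      have hq2 : 1 ≤ q2 := by omega
      have hjk2 := hjrange q2 hq2 (by omega)
      have h1 : ltX k x (j q2 + 1) a := by
        refine ltX_mono hc hlt1 ?_ (by omega)
        have := hjle (q1 + 1) q2 (by omega) (by omega)
        omega
      exact not_gtX_ltX_self hgt2 h1
    set PF : ℕ → Finset A := fun q =>
      Finset.univ.filter (· ∈ betwA k x (j q + 1) (j (q + 1))) with hPF
    set βSF : Finset A := Finset.univ.filter (· ∈ βS) with hβSF
    have hcoverF : (Finset.univ.filter (· ∈ alphaSet k x)) =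
        βSF ∪ (Finset.range (p + 1)).biUnion PF := by
      ext a
      simp only [hβSF, hPF, Finset.mem_filter, Finset.mem_univ, true_and, Finset.mem_union,
        Finset.mem_biUnion]
      constructor
      · intro ha
        rcases hcoverset a ha with ⟨q, hq, h⟩ | ⟨q, hq, h⟩
        · exact Or.inl (Set.mem_iUnion₂.2 ⟨q, hq, h⟩)
        · exact Or.inr ⟨q, hq, h⟩
      · rintro (h | ⟨q, hq, h⟩)
        · obtain ⟨q, hq, hmem⟩ := Set.mem_iUnion₂.1 h
          exact hmem.2.1
        · exact h.1
    have hdisj1 : Disjoint βSF ((Finset.range (p + 1)).biUnion PF) := by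
      rw [Finset.disjoint_left]
      intro a haβ haU
      obtain ⟨q', hq', hmem⟩ := Set.mem_iUnion₂.1 ((Finset.mem_filter.1 haβ).2)
      obtain ⟨q, hqr, hP⟩ := Finset.mem_biUnion.1 haU
      exact hdisjBP a q' hq' hmem q hqr (Finset.mem_filter.1 hP).2
    have hcardα : (Finset.univ.filter (· ∈ alphaSet k x)).card =
        βSF.card + ∑ q ∈ Finset.range (p + 1), (PF q).card := by
      rw [hcoverF, Finset.card_union_of_disjoint hdisj1, Finset.card_biUnion]
      intro q1 h1 q2 h2 hne
      rw [Function.onFun, Finset.disjoint_left]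
      intro a ha1 ha2
      rcases lt_or_gt_of_ne hne with h | h
      · exact hdisjPP q1 q2 h (Finset.mem_range.1 h2) a (Finset.mem_filter.1 ha1).2
          (Finset.mem_filter.1 ha2).2
      · exact hdisjPP q2 q1 h (Finset.mem_range.1 h1) a (Finset.mem_filter.1 ha2).2
          (Finset.mem_filter.1 ha1).2
    have hsum_eq : ∑ q ∈ Finset.range (p + 1), ((betwA k x (j q + 1) (j (q + 1))).ncard : ℤ) =
        ∑ q ∈ Finset.range (p + 1), ((PF q).card : ℤ) := by
      refine Finset.sum_congr rfl (fun q _ => ?_)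
      rw [hncard (betwA k x (j q + 1) (j (q + 1)))]
    have e1 : βS.ncard = βSF.card := by
      rw [hncard βS, hβSF]
    rw [e1, hsum_eq]
    have hZ : ∑ q ∈ Finset.range (p + 1), ((PF q).card : ℤ) =
        ((∑ q ∈ Finset.range (p + 1), (PF q).card : ℕ) : ℤ) := by
      push_cast
      rfl
    rw [hZ]
    omega

end Stanley
end
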